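/- arXiv:2501.07686 — 5 statements merged into one kernel-verified Lean document; each statement's English description precedes it below -/
import Mathlib

section
/- Let A be an n×n complex matrix, λ an eigenvalue of A, ε > 0, and r > 1. Let A₀ := A − λI and let σ_{n−1}(A₀) denote its second smallest singular value. Then for every z in the ε-pseudospectrum of A (i.e., σₙ(A−zI) < ε) with |z−λ| < σ_{n−1}(A₀)/r, the ratio σₙ(A−zI)/σ_{n−1}(A−zI) is less than ε·r/((r−1)·σ_{n−1}(A₀)). -/
open Matrix

/-- The list of singular values of a square complex matrix, sorted increasingly. -/
noncomputable def svalsList {m : Type*} [Fintype m] [DecidableEq m] (M : Matrix m m ℂ) : List ℝ :=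
  (Finset.univ.val.map fun i =>
    Real.sqrt (((Matrix.isHermitian_conjTranspose_mul_self M)).eigenvalues i)).sort (· ≤ ·)

/-- `sval M j` is the `j`-th largest singular value of `M` (1-indexed, so
`sval M 1` is the largest and `sval M (card m)` the smallest). -/
noncomputable def sval {m : Type*} [Fintype m] [DecidableEq m] (M : Matrix m m ℂ) (j : ℕ) : ℝ :=
  (svalsList M).getD (Fintype.card m - j) 0

/-- `S_ε(A)`: points `z` where `z` is an eigenvalue of `A`, or `A - zI` is invertible and
the ratio of the second largest to the largest singular value of `(A - zI)⁻¹` is `< ε`. -/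
noncomputable def Sset {m : Type*} [Fintype m] [DecidableEq m] (ε : ℝ)
    (A : Matrix m m ℂ) : Set ℂ :=
  {z | ¬ IsUnit (A - z • 1) ∨
    (IsUnit (A - z • 1) ∧ sval (A - z • 1)⁻¹ 2 / sval (A - z • 1)⁻¹ 1 < ε)}

namespace SV
variable {n : ℕ}

noncomputable def svfun (M : Matrix (Fin n) (Fin n) ℂ) : Fin n → ℝ :=
  fun i => Real.sqrt ((Matrix.isHermitian_conjTranspose_mul_self M).eigenvalues i)

lemma svfun_nonneg (M : Matrix (Fin n) (Fin n) ℂ) (i : Fin n) : 0 ≤ svfun M i :=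
  Real.sqrt_nonneg _

lemma svalsList_eq (M : Matrix (Fin n) (Fin n) ℂ) :
    svalsList M = List.ofFn (svfun M ∘ Tuple.sort (svfun M)) := by
  apply List.Perm.eq_of_sortedLE (List.sortedLE_iff_pairwise.mpr (Multiset.pairwise_sort _ _))
    (Monotone.sortedLE_ofFn (Tuple.monotone_sort _)) ?_
  rw [← Multiset.coe_eq_coe, Multiset.sort_eq]
  rw [List.ofFn_eq_map, ← Multiset.map_coe]
  have h1 : (↑(List.finRange n) : Multiset (Fin n)) = (Finset.univ : Finset (Fin n)).val := by
    simp [Finset.univ, Fintype.elems, List.finRange]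
  rw [h1, ← Multiset.map_map]
  congr 1
  symm
  calc Multiset.map (⇑(Tuple.sort (svfun M))) Finset.univ.val
      = (Finset.univ.map (Tuple.sort (svfun M)).toEmbedding).val := by
        rw [Finset.map_val]; rfl
    _ = Finset.univ.val := by rw [Finset.map_univ_equiv]

lemma sval_eq (M : Matrix (Fin n) (Fin n) ℂ) (j : ℕ) (h1 : 1 ≤ j) (h2 : j ≤ n) :
    sval M j = (svfun M ∘ Tuple.sort (svfun M)) ⟨n - j, by omega⟩ := by
  have hlen : (List.ofFn (svfun M ∘ Tuple.sort (svfun M))).length = n := by simp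
  have hlt : n - j < n := by omega
  rw [sval, svalsList_eq, Fintype.card_fin,
    List.getD_eq_getElem _ _ (by omega : n - j < (List.ofFn (svfun M ∘ Tuple.sort (svfun M))).length)]
  simp

end SV

section Eigen
open scoped InnerProductSpace ComplexConjugate
variable {n : ℕ} {H : Matrix (Fin n) (Fin n) ℂ} (hH : H.IsHermitian)

lemma toEuclideanLin_eigen (j : Fin n) :
    Matrix.toEuclideanLin H (hH.eigenvectorBasis j) =
      (hH.eigenvalues j : ℂ) • hH.eigenvectorBasis j := by
  apply (WithLp.equiv 2 (Fin n → ℂ)).injective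
  have h := hH.mulVec_eigenvectorBasis j
  funext i
  simpa [Matrix.toEuclideanLin_apply, Complex.real_smul] using congrFun h i

lemma repr_toEuclideanLin (x : EuclideanSpace ℂ (Fin n)) (i : Fin n) :
    hH.eigenvectorBasis.repr (Matrix.toEuclideanLin H x) i =
      (hH.eigenvalues i : ℂ) * hH.eigenvectorBasis.repr x i := by
  rw [OrthonormalBasis.repr_apply_apply, OrthonormalBasis.repr_apply_apply]
  have hadj : Matrix.toEuclideanLin H = LinearMap.adjoint (Matrix.toEuclideanLin H) := by
    rw [← Matrix.toEuclideanLin_conjTranspose_eq_adjoint, hH.eq]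
  calc ⟪hH.eigenvectorBasis i, Matrix.toEuclideanLin H x⟫_ℂ
      = ⟪LinearMap.adjoint (Matrix.toEuclideanLin H) (hH.eigenvectorBasis i), x⟫_ℂ := by
        rw [LinearMap.adjoint_inner_left]
    _ = ⟪Matrix.toEuclideanLin H (hH.eigenvectorBasis i), x⟫_ℂ := by rw [← hadj]
    _ = ⟪(hH.eigenvalues i : ℂ) • hH.eigenvectorBasis i, x⟫_ℂ := by
        rw [toEuclideanLin_eigen]
    _ = (hH.eigenvalues i : ℂ) * ⟪hH.eigenvectorBasis i, x⟫_ℂ := by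
        rw [inner_smul_left]; simp

lemma quad_re (x : EuclideanSpace ℂ (Fin n)) :
    Complex.re ⟪x, Matrix.toEuclideanLin H x⟫_ℂ =
      ∑ i, hH.eigenvalues i * ‖hH.eigenvectorBasis.repr x i‖ ^ 2 := by
  have h1 : ⟪x, Matrix.toEuclideanLin H x⟫_ℂ =
      ⟪hH.eigenvectorBasis.repr x, hH.eigenvectorBasis.repr (Matrix.toEuclideanLin H x)⟫_ℂ :=
    (hH.eigenvectorBasis.repr.inner_map_map _ _).symm
  rw [h1, PiLp.inner_apply]
  rw [Complex.re_sum]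
  apply Finset.sum_congr rfl
  intro i _
  rw [repr_toEuclideanLin hH x i, RCLike.inner_apply]
  set c := hH.eigenvectorBasis.repr x i
  have : (starRingEnd ℂ) c * ((hH.eigenvalues i : ℂ) * c) =
      (hH.eigenvalues i : ℂ) * (c * (starRingEnd ℂ) c) := by ring
  rw [mul_assoc, Complex.mul_conj]
  have : ((hH.eigenvalues i : ℂ) * (Complex.normSq c : ℂ)).re =
      hH.eigenvalues i * Complex.normSq c := by
    norm_cast
  rw [this, Complex.normSq_eq_norm_sq]

lemma norm_sq_repr (x : EuclideanSpace ℂ (Fin n)) :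
    ‖x‖ ^ 2 = ∑ i, ‖hH.eigenvectorBasis.repr x i‖ ^ 2 := by
  rw [← hH.eigenvectorBasis.repr.norm_map x, EuclideanSpace.norm_eq,
    Real.sq_sqrt (Finset.sum_nonneg fun i _ => sq_nonneg _)]

end Eigen

section Bounds
open scoped InnerProductSpace
variable {n : ℕ} {H : Matrix (Fin n) (Fin n) ℂ} (hH : H.IsHermitian)

lemma quad_upper (s : Set (Fin n)) (t : ℝ) (x : EuclideanSpace ℂ (Fin n))
    (hsupp : ∀ i ∉ s, hH.eigenvectorBasis.repr x i = 0)
    (hbd : ∀ i ∈ s, hH.eigenvalues i ≤ t) :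
    Complex.re ⟪x, Matrix.toEuclideanLin H x⟫_ℂ ≤ t * ‖x‖ ^ 2 := by
  rw [quad_re, norm_sq_repr hH, Finset.mul_sum]
  apply Finset.sum_le_sum
  intro i _
  by_cases hi : i ∈ s
  · exact mul_le_mul_of_nonneg_right (hbd i hi) (sq_nonneg _)
  · simp [hsupp i hi]

lemma quad_lower (s : Set (Fin n)) (t : ℝ) (ht : 0 ≤ t) (x : EuclideanSpace ℂ (Fin n))
    (hsupp : ∀ i ∉ s, hH.eigenvectorBasis.repr x i = 0)
    (hbd : ∀ i ∈ s, t ≤ hH.eigenvalues i) :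
    t * ‖x‖ ^ 2 ≤ Complex.re ⟪x, Matrix.toEuclideanLin H x⟫_ℂ := by
  rw [quad_re, norm_sq_repr hH, Finset.mul_sum]
  apply Finset.sum_le_sum
  intro i _
  by_cases hi : i ∈ s
  · exact mul_le_mul_of_nonneg_right (hbd i hi) (sq_nonneg _)
  · simp [hsupp i hi]

lemma norm_toEuclideanLin_sq (M : Matrix (Fin n) (Fin n) ℂ) (x : EuclideanSpace ℂ (Fin n)) :
    ‖Matrix.toEuclideanLin M x‖ ^ 2 =
      Complex.re ⟪x, Matrix.toEuclideanLin (Mᴴ * M) x⟫_ℂ := by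
  have h1 : Matrix.toEuclideanLin (Mᴴ * M) x =
      LinearMap.adjoint (Matrix.toEuclideanLin M) (Matrix.toEuclideanLin M x) := by
    rw [← Matrix.toEuclideanLin_conjTranspose_eq_adjoint]
    apply (WithLp.equiv 2 (Fin n → ℂ)).injective
    funext i
    simp [Matrix.toEuclideanLin_apply, ← Matrix.mulVec_mulVec]
  rw [h1, LinearMap.adjoint_inner_right]
  exact (inner_self_eq_norm_sq (𝕜 := ℂ) _).symm

lemma mem_span_iff_repr (b : OrthonormalBasis (Fin n) ℂ (EuclideanSpace ℂ (Fin n)))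
    (s : Set (Fin n)) (x : EuclideanSpace ℂ (Fin n)) :
    x ∈ Submodule.span ℂ (⇑b '' s) ↔ ∀ i ∉ s, b.repr x i = 0 := by
  rw [← b.coe_toBasis, Module.Basis.mem_span_image, Finsupp.support_subset_iff]
  simp_rw [b.coe_toBasis_repr_apply]

lemma finrank_span_basis_image (b : OrthonormalBasis (Fin n) ℂ (EuclideanSpace ℂ (Fin n)))
    (s : Finset (Fin n)) :
    Module.finrank ℂ (Submodule.span ℂ (⇑b '' ↑s)) = s.card := by
  classical
  have hli : LinearIndependent ℂ ((↑) : (⇑b '' ↑s) → EuclideanSpace ℂ (Fin n)) :=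
    (b.toBasis.linearIndependent.linearIndepOn_id.mono (by
      rw [b.coe_toBasis]; exact Set.image_subset_range _ _)).linearIndependent
  have := finrank_span_set_eq_card (s := (⇑b '' ↑s)) hli
  rw [this]
  rw [Set.toFinset_image]
  have hbinj : Function.Injective ⇑b := by
    rw [← b.coe_toBasis]; exact b.toBasis.injective
  rw [Finset.card_image_of_injective _ hbinj]
  simp

end Bounds

section Weyl
open scoped InnerProductSpace

lemma sval_nonneg' {n : ℕ} (M : Matrix (Fin n) (Fin n) ℂ) (j : ℕ) (h1 : 1 ≤ j) (h2 : j ≤ n) :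
    0 ≤ sval M j := by
  rw [SV.sval_eq M j h1 h2]; exact SV.svfun_nonneg M _

lemma weyl {n : ℕ} (hn : 2 ≤ n) (B : Matrix (Fin n) (Fin n) ℂ) (c : ℂ) :
    sval B (n - 1) ≤ sval (B + c • 1) (n - 1) + ‖c‖ := by
  classical
  set C := B + c • 1 with hCdef
  have hB := Matrix.isHermitian_conjTranspose_mul_self B
  have hC := Matrix.isHermitian_conjTranspose_mul_self C
  set σB := Tuple.sort (SV.svfun B)
  set σC := Tuple.sort (SV.svfun C)
  have hj1 : (1 : ℕ) ≤ n - 1 := by omega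
  have hj2 : n - 1 ≤ n := by omega
  have hidx : n - (n - 1) = 1 := by omega
  have hsB : sval B (n - 1) = SV.svfun B (σB ⟨1, by omega⟩) := by
    rw [SV.sval_eq B (n-1) hj1 hj2]
    simp only [Function.comp_apply]
    exact congrArg (fun k => SV.svfun B (σB k)) (Fin.ext hidx)
  have hsC : sval C (n - 1) = SV.svfun C (σC ⟨1, by omega⟩) := by
    rw [SV.sval_eq C (n-1) hj1 hj2]
    simp only [Function.comp_apply]
    exact congrArg (fun k => SV.svfun C (σC k)) (Fin.ext hidx)
  set sB := sval B (n - 1)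
  set tC := sval C (n - 1)
  have hsBnn : 0 ≤ sB := sval_nonneg' B _ hj1 hj2
  have htCnn : 0 ≤ tC := sval_nonneg' C _ hj1 hj2
  -- index sets
  set SC : Finset (Fin n) := {σC ⟨0, by omega⟩, σC ⟨1, by omega⟩} with hSCdef
  set SB : Finset (Fin n) := Finset.image σB (Finset.univ.erase ⟨0, by omega⟩) with hSBdef
  have hSCcard : SC.card = 2 := by
    rw [hSCdef, Finset.card_insert_of_notMem, Finset.card_singleton]
    simp only [Finset.mem_singleton]
    intro h
    have := σC.injective h
    simp [Fin.ext_iff] at this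
  have hSBcard : SB.card = n - 1 := by
    rw [hSBdef, Finset.card_image_of_injective _ σB.injective,
      Finset.card_erase_of_mem (Finset.mem_univ _), Finset.card_univ, Fintype.card_fin]
  -- eigenvalue bounds on the index sets
  have hboundC : ∀ i ∈ (SC : Set (Fin n)), hC.eigenvalues i ≤ tC ^ 2 := by
    intro i hi
    have hi' : i = σC ⟨0, by omega⟩ ∨ i = σC ⟨1, by omega⟩ := by
      simpa [hSCdef] using hi
    have hnn : 0 ≤ hC.eigenvalues i :=
      Matrix.eigenvalues_conjTranspose_mul_self_nonneg C i
    have hsqrt : Real.sqrt (hC.eigenvalues i) ≤ tC := by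
      rw [hsC]
      rcases hi' with h | h <;> subst h
      · exact Tuple.monotone_sort (SV.svfun C) (by simp [Fin.le_def])
      · exact le_refl _
    calc hC.eigenvalues i = Real.sqrt (hC.eigenvalues i) ^ 2 := (Real.sq_sqrt hnn).symm
      _ ≤ tC ^ 2 := by
          apply pow_le_pow_left₀ (Real.sqrt_nonneg _) hsqrt
  have hboundB : ∀ i ∈ (SB : Set (Fin n)), sB ^ 2 ≤ hB.eigenvalues i := by
    intro i hi
    simp only [hSBdef, Finset.coe_image, Set.mem_image, Finset.coe_erase] at hi
    obtain ⟨k, hk, rfl⟩ := hi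
    have hk1 : (⟨1, by omega⟩ : Fin n) ≤ k := by
      rcases hk with ⟨_, hkne⟩
      simp only [Fin.le_def]
      have : k ≠ ⟨0, by omega⟩ := by simpa using hkne
      have : (k : ℕ) ≠ 0 := fun h => this (Fin.ext h)
      omega
    have hmono : sB ≤ Real.sqrt (hB.eigenvalues (σB k)) := by
      rw [hsB]
      exact Tuple.monotone_sort (SV.svfun B) hk1
    have hnn : 0 ≤ hB.eigenvalues (σB k) :=
      Matrix.eigenvalues_conjTranspose_mul_self_nonneg B _
    calc sB ^ 2 ≤ Real.sqrt (hB.eigenvalues (σB k)) ^ 2 := pow_le_pow_left₀ hsBnn hmono 2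
      _ = hB.eigenvalues (σB k) := Real.sq_sqrt hnn
  -- subspaces
  set V := Submodule.span ℂ (⇑hC.eigenvectorBasis '' ↑SC)
  set W := Submodule.span ℂ (⇑hB.eigenvectorBasis '' ↑SB)
  have hVrank : Module.finrank ℂ V = 2 := by
    rw [finrank_span_basis_image, hSCcard]
  have hWrank : Module.finrank ℂ W = n - 1 := by
    rw [finrank_span_basis_image, hSBcard]
  have hinf : 0 < Module.finrank ℂ ↥(V ⊓ W) := by
    have hsum := Submodule.finrank_sup_add_finrank_inf_eq V W
    have hle : Module.finrank ℂ ↥(V ⊔ W) ≤ n := by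
      have := Submodule.finrank_le (V ⊔ W)
      rwa [finrank_euclideanSpace_fin] at this
    omega
  haveI : Nontrivial ↥(V ⊓ W) := Module.finrank_pos_iff.mp hinf
  obtain ⟨⟨x, hxmem⟩, hxne⟩ := exists_ne (0 : ↥(V ⊓ W))
  have hx0 : x ≠ 0 := fun h => hxne (Subtype.ext h)
  have hxV : x ∈ V := hxmem.1
  have hxW : x ∈ W := hxmem.2
  have hxnorm : 0 < ‖x‖ := norm_pos_iff.mpr hx0
  -- upper bound on ‖C x‖
  have hCx : ‖Matrix.toEuclideanLin C x‖ ≤ tC * ‖x‖ := by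
    have h1 : ‖Matrix.toEuclideanLin C x‖ ^ 2 ≤ tC ^ 2 * ‖x‖ ^ 2 := by
      rw [norm_toEuclideanLin_sq]
      exact quad_upper hC (↑SC) (tC ^ 2) x
        (fun i hi => (mem_span_iff_repr hC.eigenvectorBasis (↑SC) x).mp hxV i hi) hboundC
    nlinarith [norm_nonneg (Matrix.toEuclideanLin C x), norm_nonneg x,
      mul_nonneg htCnn (le_of_lt hxnorm)]
  -- lower bound on ‖B x‖
  have hBx : sB * ‖x‖ ≤ ‖Matrix.toEuclideanLin B x‖ := by
    have h1 : sB ^ 2 * ‖x‖ ^ 2 ≤ ‖Matrix.toEuclideanLin B x‖ ^ 2 := by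
      rw [norm_toEuclideanLin_sq]
      exact quad_lower hB (↑SB) (sB ^ 2) (sq_nonneg _) x
        (fun i hi => (mem_span_iff_repr hB.eigenvectorBasis (↑SB) x).mp hxW i hi) hboundB
    nlinarith [norm_nonneg (Matrix.toEuclideanLin B x), norm_nonneg x,
      mul_nonneg hsBnn (le_of_lt hxnorm)]
  -- triangle inequality
  have hdecomp : Matrix.toEuclideanLin C x = Matrix.toEuclideanLin B x + c • x := by
    rw [hCdef, map_add, LinearEquiv.map_smul]
    congr 1
    apply (WithLp.equiv 2 (Fin n → ℂ)).injective
    funext i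
    simp [Matrix.toEuclideanLin_apply, Matrix.one_mulVec]
  have htri : ‖Matrix.toEuclideanLin B x‖ ≤ ‖Matrix.toEuclideanLin C x‖ + ‖c‖ * ‖x‖ := by
    have : Matrix.toEuclideanLin B x = Matrix.toEuclideanLin C x - c • x := by
      rw [hdecomp]; abel
    rw [this]
    calc ‖Matrix.toEuclideanLin C x - c • x‖
        ≤ ‖Matrix.toEuclideanLin C x‖ + ‖c • x‖ := norm_sub_le _ _
      _ = ‖Matrix.toEuclideanLin C x‖ + ‖c‖ * ‖x‖ := by
          rw [norm_smul]
  have hfinal : sB * ‖x‖ ≤ (tC + ‖c‖) * ‖x‖ := by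
    calc sB * ‖x‖ ≤ ‖Matrix.toEuclideanLin B x‖ := hBx
      _ ≤ ‖Matrix.toEuclideanLin C x‖ + ‖c‖ * ‖x‖ := htri
      _ ≤ tC * ‖x‖ + ‖c‖ * ‖x‖ := by linarith
      _ = (tC + ‖c‖) * ‖x‖ := by ring
  exact le_of_mul_le_mul_right (by linarith [hfinal]) hxnorm

end Weyl


/-- points of the ε-pseudospectrum close to an eigenvalue λ have small ratio
of smallest to second-smallest singular value of `A - zI`. -/
theorem pseudospectrum_ratio_bound {n : ℕ} (hn : 2 ≤ n) (A : Matrix (Fin n) (Fin n) ℂ)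
    (lam : ℂ) (hlam : ¬ IsUnit (A - lam • 1)) (ε r : ℝ) (hε : 0 < ε) (hr : 1 < r)
    (hs : 0 < sval (A - lam • 1) (n - 1)) (z : ℂ)
    (hz1 : sval (A - z • 1) n < ε)
    (hz2 : ‖z - lam‖ < sval (A - lam • 1) (n - 1) / r) :
    sval (A - z • 1) n / sval (A - z • 1) (n - 1) <
      ε * r / ((r - 1) * sval (A - lam • 1) (n - 1)) := by
  set s := sval (A - lam • 1) (n - 1) with hsdef
  set t1 := sval (A - z • 1) (n - 1) with ht1def
  set t0 := sval (A - z • 1) n with ht0def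
  have hmat : (A - lam • 1) + (lam - z) • (1 : Matrix (Fin n) (Fin n) ℂ) = A - z • 1 := by
    rw [sub_smul]; abel
  have hweyl := weyl hn (A - lam • 1) (lam - z)
  rw [hmat] at hweyl
  have habs : ‖lam - z‖ = ‖z - lam‖ := by
    exact norm_sub_rev lam z
  rw [habs] at hweyl
  have hrpos : (0 : ℝ) < r := by linarith
  have hd : (0 : ℝ) < s - s / r := by
    have : s / r < s := div_lt_self hs hr
    linarith
  have ht1 : s - s / r < t1 := by
    have : ‖z - lam‖ < s / r := hz2
    linarith
  have ht1pos : (0 : ℝ) < t1 := hd.trans ht1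
  have ht0nn : (0 : ℝ) ≤ t0 := sval_nonneg' (A - z • 1) n (by omega) (le_refl n)
  have key1 : t0 / t1 ≤ t0 / (s - s / r) := by
    apply div_le_div_of_nonneg_left ht0nn hd (le_of_lt ht1)
  have key2 : t0 / (s - s / r) < ε / (s - s / r) := (div_lt_div_iff_of_pos_right hd).mpr hz1
  have key3 : ε / (s - s / r) = ε * r / ((r - 1) * s) := by
    have h1 : (r - 1) * s > 0 := mul_pos (by linarith) hs
    rw [div_eq_div_iff (ne_of_gt hd) (ne_of_gt h1)]
    field_simp
  calc t0 / t1 ≤ t0 / (s - s / r) := key1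
    _ < ε / (s - s / r) := key2
    _ = ε * r / ((r - 1) * s) := key3
end

section
/- Let A₀ be an n×n complex matrix with singular value decomposition A₀ = UΣVᴴ, where Σ = diag(σ₁,...,σ_{n−1},0) with σ₁ ≥ ... ≥ σ_{n−1} > 0, and let uₙ, vₙ be the last columns of U, V. Let A₀† = V_{n−1}Σ_{n−1}⁻¹U_{n−1}ᴴ be the Moore–Penrose pseudoinverse. Then for the vector w := vₙ + Σ_{j=1}^k z^j (A₀†)^j vₙ, one has (A₀ − zI)w = −Σ_{j=1}^k z^j (uₙᴴ(A₀†)^{j−1}vₙ)·uₙ − z^{k+1}(A₀†)^k vₙ. -/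
open Matrix

section Aux

variable {n : ℕ}

lemma sumIccAux {E : Type*} [AddCommMonoid E] (f : ℕ → E) (k : ℕ) :
    ∑ j ∈ Finset.Icc 1 k, f j = ∑ i ∈ Finset.range k, f (i + 1) := by
  induction k with
  | zero => simp
  | succ k ih =>
    rw [Finset.sum_Icc_succ_top (by omega), ih, Finset.sum_range_succ]

lemma vecMulVec_mulVec_eq {m : Type*} [Fintype m] (a b x : m → ℂ) :
    (vecMulVec a b) *ᵥ x = (b ⬝ᵥ x) • a := by
  funext i
  simp only [vecMulVec_apply, mulVec, dotProduct, Pi.smul_apply, smul_eq_mul]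
  rw [Finset.sum_mul]
  exact Finset.sum_congr rfl fun j _ => by ring

end Aux

open Finset in
/-- for the test vector `w = vₙ + ∑_{j=1}^k zʲ (A₀†)ʲ vₙ`, one has
`(A₀ - zI) w = -∑_{j=1}^k zʲ (uₙᴴ (A₀†)^{j-1} vₙ) uₙ - z^{k+1} (A₀†)ᵏ vₙ`.
Here `U, Σ, Vᴴ` is an SVD of `A₀` with singular values `σ₁ ≥ … ≥ σ_{n-1} > 0` and a final
zero singular value, `uₙ, vₙ` are the corresponding last singular vectors, and `P = A₀†`
is the Moore–Penrose pseudoinverse `V_{n-1} Σ_{n-1}⁻¹ U_{n-1}ᴴ`. -/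
theorem testVector_identity {n : ℕ} (hn : 1 ≤ n)
    (U V : Matrix (Fin (n + 1)) (Fin (n + 1)) ℂ)
    (hU : U ∈ Matrix.unitaryGroup (Fin (n + 1)) ℂ)
    (hV : V ∈ Matrix.unitaryGroup (Fin (n + 1)) ℂ)
    (σ : Fin (n + 1) → ℝ)
    (hσlast : σ (Fin.last n) = 0)
    (hσpos : ∀ i : Fin (n + 1), i ≠ Fin.last n → 0 < σ i)
    (hσdec : ∀ i j : Fin (n + 1), i ≤ j → σ j ≤ σ i)
    (A₀ : Matrix (Fin (n + 1)) (Fin (n + 1)) ℂ)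
    (hA₀ : A₀ = U * Matrix.diagonal (fun i => (σ i : ℂ)) * Vᴴ)
    (P : Matrix (Fin (n + 1)) (Fin (n + 1)) ℂ)
    (hP : P = V * Matrix.diagonal (fun i => if i = Fin.last n then 0 else ((σ i : ℂ))⁻¹) * Uᴴ)
    (un vn : Fin (n + 1) → ℂ)
    (hun : un = fun i => U i (Fin.last n))
    (hvn : vn = fun i => V i (Fin.last n))
    (z : ℂ) (k : ℕ) (hk : 1 ≤ k)
    (w : Fin (n + 1) → ℂ)
    (hw : w = vn + ∑ j ∈ Finset.Icc 1 k, z ^ j • ((P ^ j) *ᵥ vn)) :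
    (A₀ - z • 1) *ᵥ w =
      - ∑ j ∈ Finset.Icc 1 k, (z ^ j * (star un ⬝ᵥ ((P ^ (j - 1)) *ᵥ vn))) • un
        - z ^ (k + 1) • ((P ^ k) *ᵥ vn) := by
  have hVV : Vᴴ * V = 1 := by
    rw [← Matrix.star_eq_conjTranspose]
    exact Matrix.mem_unitaryGroup_iff'.mp hV
  have hUU : U * Uᴴ = 1 := by
    rw [← Matrix.star_eq_conjTranspose]
    exact Matrix.mem_unitaryGroup_iff.mp hU
  set e : Fin (n + 1) → ℂ := Pi.single (Fin.last n) 1 with he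
  have hvn' : vn = V *ᵥ e := by
    funext i
    simp [hvn, he, mulVec, dotProduct, Pi.single_apply]
  -- A₀ vn = 0
  have hA0vn : A₀ *ᵥ vn = 0 := by
    rw [hA₀, hvn', mulVec_mulVec, Matrix.mul_assoc, Matrix.mul_assoc, hVV, Matrix.mul_one,
      ← mulVec_mulVec]
    have : Matrix.diagonal (fun i => (σ i : ℂ)) *ᵥ e = 0 := by
      funext i
      by_cases h : i = Fin.last n <;>
        simp [he, mulVec_diagonal, Pi.single_apply, h, hσlast]
    rw [this]
    simp
  -- A₀ * P = 1 - vecMulVec un (star un)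
  have hA0P : A₀ * P = 1 - vecMulVec un (star un) := by
    rw [hA₀, hP]
    have h1 : U * Matrix.diagonal (fun i => (σ i : ℂ)) * Vᴴ *
        (V * Matrix.diagonal (fun i => if i = Fin.last n then 0 else ((σ i : ℂ))⁻¹) * Uᴴ) =
        U * Matrix.diagonal (fun i => if i = Fin.last n then (0 : ℂ) else 1) * Uᴴ := by
      have hd : Matrix.diagonal (fun i => (σ i : ℂ)) *
          Matrix.diagonal (fun i => if i = Fin.last n then 0 else ((σ i : ℂ))⁻¹) =
          Matrix.diagonal (fun i => if i = Fin.last n then (0 : ℂ) else 1) := by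
        rw [Matrix.diagonal_mul_diagonal]
        apply congrArg Matrix.diagonal
        funext i
        by_cases h : i = Fin.last n
        · simp [h]
        · have : (σ i : ℂ) ≠ 0 := by
            exact_mod_cast (hσpos i h).ne'
          simp [h, mul_inv_cancel₀ this]
      calc U * Matrix.diagonal (fun i => (σ i : ℂ)) * Vᴴ *
            (V * Matrix.diagonal (fun i => if i = Fin.last n then 0 else ((σ i : ℂ))⁻¹) * Uᴴ)
          = U * (Matrix.diagonal (fun i => (σ i : ℂ)) * ((Vᴴ * V) *
            Matrix.diagonal (fun i => if i = Fin.last n then 0 else ((σ i : ℂ))⁻¹))) * Uᴴ := by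
            simp only [Matrix.mul_assoc]
        _ = U * Matrix.diagonal (fun i => if i = Fin.last n then (0 : ℂ) else 1) * Uᴴ := by
            rw [hVV, Matrix.one_mul, hd]
    rw [h1]
    have h2 : Matrix.diagonal (fun i => if i = Fin.last n then (0 : ℂ) else 1) =
        1 - Matrix.diagonal (fun i => if i = Fin.last n then (1 : ℂ) else 0) := by
      ext i j
      simp only [Matrix.sub_apply, Matrix.diagonal_apply, Matrix.one_apply]
      by_cases hij : i = j
      · subst hij
        by_cases h : i = Fin.last n <;> simp [h]
      · simp [hij]
    rw [h2, Matrix.mul_sub, Matrix.sub_mul, Matrix.mul_one, hUU]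
    congr 1
    ext i j
    rw [Matrix.mul_apply]
    simp only [Matrix.mul_diagonal, vecMulVec_apply, hun]
    simp only [mul_ite, mul_one, mul_zero, ite_mul, zero_mul]
    rw [Finset.sum_ite_eq' Finset.univ (Fin.last n)
      (fun x => U i x * Uᴴ x j)]
    simp [Matrix.conjTranspose_apply, Pi.star_apply]
  -- key step
  set Q : ℕ → (Fin (n + 1) → ℂ) := fun j => (P ^ j) *ᵥ vn with hQ
  have hQ0 : Q 0 = vn := by simp [hQ]
  have hstep : ∀ j : ℕ, A₀ *ᵥ Q (j + 1) = Q j - (star un ⬝ᵥ Q j) • un := by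
    intro j
    have : Q (j + 1) = P *ᵥ Q j := by
      simp only [hQ, mulVec_mulVec, ← pow_succ']
    rw [this, mulVec_mulVec]
    rw [hA0P, Matrix.sub_mulVec, Matrix.one_mulVec, vecMulVec_mulVec_eq]
  -- expand
  rw [hw, sumIccAux (fun j => z ^ j • Q j) k,
    sumIccAux (fun j => (z ^ j * (star un ⬝ᵥ Q (j - 1))) • un) k]
  simp only [Nat.add_sub_cancel]
  rw [Matrix.sub_mulVec, Matrix.smul_mulVec, Matrix.one_mulVec, Matrix.mulVec_add]
  have hsum : A₀ *ᵥ (∑ i ∈ Finset.range k, z ^ (i + 1) • Q (i + 1)) =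
      ∑ i ∈ Finset.range k, z ^ (i + 1) • (A₀ *ᵥ Q (i + 1)) := by
    rw [show ∀ v, A₀ *ᵥ v = Matrix.mulVecLin A₀ v from fun v => rfl]
    rw [map_sum]
    simp [Matrix.mulVecLin_apply, Matrix.mulVec_smul]
  rw [hsum, hA0vn]
  simp only [hstep, smul_sub]
  rw [Finset.sum_sub_distrib]
  have htel : ∑ i ∈ Finset.range k, (z ^ (i + 1) • Q i - z ^ (i + 1 + 1) • Q (i + 1)) =
      z ^ 1 • Q 0 - z ^ (k + 1) • Q k :=
    Finset.sum_range_sub' (fun i => z ^ (i + 1) • Q i) k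
  have hz : z • (vn + ∑ i ∈ Finset.range k, z ^ (i + 1) • Q (i + 1)) =
      z • vn + ∑ i ∈ Finset.range k, z ^ (i + 1 + 1) • Q (i + 1) := by
    rw [smul_add, Finset.smul_sum]
    congr 1
    refine Finset.sum_congr rfl fun i _ => ?_
    rw [smul_smul, ← pow_succ']
  rw [hz]
  have hsplit : ∑ i ∈ Finset.range k, z ^ (i + 1) • Q i -
      ∑ i ∈ Finset.range k, z ^ (i + 1 + 1) • Q (i + 1) =
      z ^ 1 • Q 0 - z ^ (k + 1) • Q k := by
    rw [← Finset.sum_sub_distrib]; exact htel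
  have hcomb : ∀ i, z ^ (i + 1) • (star un ⬝ᵥ Q i) • un =
      (z ^ (i + 1) * (star un ⬝ᵥ Q i)) • un := fun i => by rw [smul_smul]
  simp only [hcomb]
  rw [hQ0, pow_one, sub_eq_iff_eq_add] at hsplit
  rw [hsplit]
  abel
end

section
/- Let A₀ be an n×n complex matrix with a zero singular value and SVD A₀ = UΣVᴴ, Σ = diag(σ₁,...,σ_{n−1},0), σ_{n−1} > 0, and let uₙ, vₙ be the corresponding singular vectors and A₀† the Moore–Penrose pseudoinverse. Then for every z ∈ ℂ and every positive integer k, the smallest singular value of A₀ − zI satisfies σₙ(A₀−zI) ≤ |z|·( Σ_{j=1}^k |z|^{j−1} |uₙᴴ(A₀†)^{j−1}vₙ| + |z|^k / σ_{n−1}^k ). -/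
open Matrix

section AuxNorm

open scoped ComplexOrder

/-- Euclidean norm of a complex vector indexed by `Fin N`. -/
noncomputable def enorm2 {N : ℕ} (x : Fin N → ℂ) : ℝ :=
  ‖(WithLp.linearEquiv 2 ℂ (Fin N → ℂ)).symm x‖

lemma enorm2_nonneg {N : ℕ} (x : Fin N → ℂ) : 0 ≤ enorm2 x := norm_nonneg _

lemma enorm2_sq {N : ℕ} (x : Fin N → ℂ) : enorm2 x ^ 2 = (star x ⬝ᵥ x).re := by
  have h : (inner ℂ ((WithLp.equiv 2 (Fin N → ℂ)).symm x) ((WithLp.equiv 2 (Fin N → ℂ)).symm x) : ℂ)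
      = star x ⬝ᵥ x := by rw [dotProduct_comm]; exact EuclideanSpace.inner_toLp_toLp x x
  rw [enorm2, ← h, norm_sq_eq_re_inner (𝕜 := ℂ)]
  rfl

lemma enorm2_smul {N : ℕ} (c : ℂ) (x : Fin N → ℂ) :
    enorm2 (c • x) = ‖c‖ * enorm2 x := by
  rw [enorm2, _root_.map_smul, norm_smul]; rfl

lemma enorm2_sum_le {N : ℕ} {ι : Type*} (s : Finset ι) (f : ι → (Fin N → ℂ)) :
    enorm2 (∑ i ∈ s, f i) ≤ ∑ i ∈ s, enorm2 (f i) := by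
  rw [enorm2, map_sum]
  exact norm_sum_le _ _

lemma enorm2_add_le {N : ℕ} (x y : Fin N → ℂ) : enorm2 (x + y) ≤ enorm2 x + enorm2 y := by
  rw [enorm2, map_add]; exact norm_add_le _ _

lemma enorm2_neg {N : ℕ} (x : Fin N → ℂ) : enorm2 (-x) = enorm2 x := by
  rw [enorm2, map_neg, norm_neg]; rfl

lemma dot_self_re {N : ℕ} (y : Fin N → ℂ) :
    (star y ⬝ᵥ y).re = ∑ i, Complex.normSq (y i) := by
  rw [dotProduct, Complex.re_sum]
  refine Finset.sum_congr rfl fun i _ => ?_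
  simp only [Pi.star_apply, Complex.mul_re, Complex.normSq_apply, RCLike.star_def,
    Complex.conj_re, Complex.conj_im]
  ring

lemma dot_sum {N : ℕ} {ι : Type*} (s : Finset ι) (v : Fin N → ℂ) (f : ι → (Fin N → ℂ)) :
    v ⬝ᵥ (∑ i ∈ s, f i) = ∑ i ∈ s, v ⬝ᵥ f i := by
  simp only [dotProduct, Finset.sum_apply, Finset.mul_sum]
  exact Finset.sum_comm

lemma sq_le_imp_le {a b : ℝ} (ha : 0 ≤ a) (hb : 0 ≤ b) (h : a ^ 2 ≤ b ^ 2) : a ≤ b := by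
  nlinarith

lemma quad_eq {N : ℕ} (W : Matrix (Fin N) (Fin N) ℂ) (d : Fin N → ℝ) (x : Fin N → ℂ) :
    (star x ⬝ᵥ ((W * Matrix.diagonal (fun i => (d i : ℂ)) * Wᴴ) *ᵥ x)).re
      = ∑ i, d i * Complex.normSq ((Wᴴ *ᵥ x) i) := by
  set c := Wᴴ *ᵥ x with hc
  have h1 : (W * Matrix.diagonal (fun i => (d i : ℂ)) * Wᴴ) *ᵥ x
      = W *ᵥ (Matrix.diagonal (fun i => (d i : ℂ)) *ᵥ c) := by
    rw [← mulVec_mulVec, ← mulVec_mulVec]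
  have h2 : star x ᵥ* W = star c := by
    rw [hc, star_mulVec, conjTranspose_conjTranspose]
  rw [h1, dotProduct_mulVec, h2]
  rw [dotProduct, Complex.re_sum]
  refine Finset.sum_congr rfl fun i _ => ?_
  rw [mulVec_diagonal]
  simp only [Pi.star_apply, Complex.mul_re, Complex.mul_im, Complex.ofReal_re,
    Complex.ofReal_im, Complex.normSq_apply, RCLike.star_def, Complex.conj_re, Complex.conj_im]
  ring

lemma mulVec_conjTranspose_self {N : ℕ} {W : Matrix (Fin N) (Fin N) ℂ}
    (hW : W ∈ Matrix.unitaryGroup (Fin N) ℂ) (x : Fin N → ℂ) :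
    W *ᵥ (Wᴴ *ᵥ x) = x := by
  rw [mulVec_mulVec, ← star_eq_conjTranspose, Unitary.mul_star_self_of_mem hW, one_mulVec]

lemma enorm2_sq_eq_sum {N : ℕ} {W : Matrix (Fin N) (Fin N) ℂ}
    (hW : W ∈ Matrix.unitaryGroup (Fin N) ℂ) (x : Fin N → ℂ) :
    enorm2 x ^ 2 = ∑ i, Complex.normSq ((Wᴴ *ᵥ x) i) := by
  set c := Wᴴ *ᵥ x with hc
  have h2 : star x ᵥ* W = star c := by
    rw [hc, star_mulVec, conjTranspose_conjTranspose]
  have h : star c ⬝ᵥ c = star x ⬝ᵥ x := by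
    rw [← h2, ← dotProduct_mulVec, mulVec_conjTranspose_self hW x]
  rw [enorm2_sq, ← h, dot_self_re]

/-- The smallest singular value bounds `enorm2 (M *ᵥ w)` from below whenever `1 ≤ enorm2 w`. -/
lemma sval_le_enorm_mulVec {N : ℕ} (hN : 0 < N) (M : Matrix (Fin N) (Fin N) ℂ)
    (w : Fin N → ℂ) (hw : 1 ≤ enorm2 w) : sval M N ≤ enorm2 (M *ᵥ w) := by
  set hH := Matrix.isHermitian_conjTranspose_mul_self M with hHdef
  have hcard : Fintype.card (Fin N) = N := Fintype.card_fin N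
  have hlen : (svalsList M).length = N := by
    rw [svalsList, Multiset.length_sort, Multiset.card_map]; simp
  have hmem : sval M N ∈ svalsList M := by
    rw [sval, hcard, Nat.sub_self]
    rw [List.getD_eq_getElem _ _ (by omega : 0 < (svalsList M).length)]
    exact List.getElem_mem _
  have hmin : ∀ x ∈ svalsList M, sval M N ≤ x := by
    have hsorted : (svalsList M).Pairwise (· ≤ ·) := Multiset.pairwise_sort _ _
    intro x hx
    rw [sval, hcard, Nat.sub_self]
    cases hl : svalsList M with
    | nil => rw [hl] at hx; simp at hx
    | cons a t =>
        rw [hl] at hx hsorted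
        rw [List.getD_cons_zero]
        rcases List.mem_cons.mp hx with rfl | hx
        · exact le_refl _
        · exact List.rel_of_pairwise_cons hsorted hx
  have hex : ∃ i, sval M N = Real.sqrt (hH.eigenvalues i) := by
    have h := hmem
    rw [svalsList, Multiset.mem_sort] at h
    obtain ⟨i, -, hi⟩ := Multiset.mem_map.mp h
    exact ⟨i, hi.symm⟩
  obtain ⟨i0, hi0⟩ := hex
  have hs0 : 0 ≤ sval M N := by rw [hi0]; exact Real.sqrt_nonneg _
  have hsle : ∀ i, sval M N ≤ Real.sqrt (hH.eigenvalues i) := fun i =>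
    hmin _ (by
      rw [svalsList, Multiset.mem_sort]
      exact Multiset.mem_map_of_mem _ (Finset.mem_univ i))
  have heig0 : ∀ i, 0 ≤ hH.eigenvalues i := fun i =>
    (Matrix.posSemidef_conjTranspose_mul_self M).eigenvalues_nonneg i
  have hsq : ∀ i, sval M N ^ 2 ≤ hH.eigenvalues i := fun i => by
    calc sval M N ^ 2 ≤ Real.sqrt (hH.eigenvalues i) ^ 2 := pow_le_pow_left₀ hs0 (hsle i) 2
      _ = hH.eigenvalues i := Real.sq_sqrt (heig0 i)
  set Q : Matrix (Fin N) (Fin N) ℂ := (hH.eigenvectorUnitary : Matrix (Fin N) (Fin N) ℂ) with hQ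
  have hQmem : Q ∈ Matrix.unitaryGroup (Fin N) ℂ := (hH.eigenvectorUnitary).2
  have hspec : Mᴴ * M = Q * Matrix.diagonal (fun i => (hH.eigenvalues i : ℂ)) * Qᴴ := by
    have h := hH.spectral_theorem
    rw [Unitary.conjStarAlgAut_apply, star_eq_conjTranspose] at h
    exact h
  have hquad : enorm2 (M *ᵥ w) ^ 2 = ∑ i, hH.eigenvalues i * Complex.normSq ((Qᴴ *ᵥ w) i) := by
    rw [enorm2_sq]
    have h1 : star (M *ᵥ w) ⬝ᵥ (M *ᵥ w) = star w ⬝ᵥ ((Mᴴ * M) *ᵥ w) := by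
      rw [star_mulVec, dotProduct_mulVec, vecMul_vecMul, dotProduct_mulVec]
    conv_lhs => rw [h1, hspec]
    rw [quad_eq]
  have key : (sval M N) ^ 2 * enorm2 w ^ 2 ≤ enorm2 (M *ᵥ w) ^ 2 := by
    rw [hquad, enorm2_sq_eq_sum hQmem w, Finset.mul_sum]
    exact Finset.sum_le_sum fun i _ =>
      mul_le_mul_of_nonneg_right (hsq i) (Complex.normSq_nonneg _)
  have hE : 0 ≤ enorm2 (M *ᵥ w) := norm_nonneg _
  have hse : sval M N * enorm2 w ≤ enorm2 (M *ᵥ w) := by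
    refine sq_le_imp_le (mul_nonneg hs0 (enorm2_nonneg w)) hE ?_
    rw [mul_pow]; exact key
  calc sval M N ≤ sval M N * enorm2 w := le_mul_of_one_le_right hs0 hw
    _ ≤ enorm2 (M *ᵥ w) := hse

lemma diag_star_mul {N : ℕ} (f : Fin N → ℂ) (d : Fin N → ℝ)
    (h : ∀ i, (starRingEnd ℂ) (f i) * f i = (d i : ℂ)) :
    Matrix.diagonal (star f) * Matrix.diagonal f
      = Matrix.diagonal (fun i => (d i : ℂ)) := by
  rw [Matrix.diagonal_mul_diagonal]
  simp only [Pi.star_apply]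
  have hf : (fun i => star (f i) * f i) = fun i => ((d i : ℂ)) := by
    funext i
    simpa using h i
  rw [hf]

end AuxNorm

open Finset in
/-- bound on the smallest singular value of `A₀ - zI`:
`σₙ(A₀ - zI) ≤ |z| (∑_{j=1}^k |z|^{j-1} |uₙᴴ (A₀†)^{j-1} vₙ| + |z|ᵏ / σ_{n-1}ᵏ)`. -/
theorem smallest_sval_bound_finite {n : ℕ} (hn : 1 ≤ n)
    (U V : Matrix (Fin (n + 1)) (Fin (n + 1)) ℂ)
    (hU : U ∈ Matrix.unitaryGroup (Fin (n + 1)) ℂ)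
    (hV : V ∈ Matrix.unitaryGroup (Fin (n + 1)) ℂ)
    (σ : Fin (n + 1) → ℝ)
    (hσlast : σ (Fin.last n) = 0)
    (hσpos : ∀ i : Fin (n + 1), i ≠ Fin.last n → 0 < σ i)
    (hσdec : ∀ i j : Fin (n + 1), i ≤ j → σ j ≤ σ i)
    (A₀ : Matrix (Fin (n + 1)) (Fin (n + 1)) ℂ)
    (hA₀ : A₀ = U * Matrix.diagonal (fun i => (σ i : ℂ)) * Vᴴ)
    (P : Matrix (Fin (n + 1)) (Fin (n + 1)) ℂ)
    (hP : P = V * Matrix.diagonal (fun i => if i = Fin.last n then 0 else ((σ i : ℂ))⁻¹) * Uᴴ)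
    (un vn : Fin (n + 1) → ℂ)
    (hun : un = fun i => U i (Fin.last n))
    (hvn : vn = fun i => V i (Fin.last n))
    (z : ℂ) (k : ℕ) (hk : 1 ≤ k) :
    sval (A₀ - z • 1) (n + 1) ≤
      ‖z‖ *
        ((∑ j ∈ Finset.Icc 1 k,
            ‖z‖ ^ (j - 1) * ‖star un ⬝ᵥ ((P ^ (j - 1)) *ᵥ vn)‖) +
          ‖z‖ ^ k / (σ ⟨n - 1, by omega⟩) ^ k) := by
  have hVV : Vᴴ * V = 1 := by
    have h := Unitary.star_mul_self_of_mem hV; rwa [star_eq_conjTranspose] at h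
  have hUU' : U * Uᴴ = 1 := by
    have h := Unitary.mul_star_self_of_mem hU; rwa [star_eq_conjTranspose] at h
  have hUU : Uᴴ * U = 1 := by
    have h := Unitary.star_mul_self_of_mem hU; rwa [star_eq_conjTranspose] at h
  set L := Fin.last n with hLdef
  have hvn1 : vn = V *ᵥ Pi.single L 1 := by
    rw [hvn]; funext i; rw [mulVec_single]; simp
  have hun1 : un = U *ᵥ Pi.single L 1 := by
    rw [hun]; funext i; rw [mulVec_single]; simp
  have hVvn : Vᴴ *ᵥ vn = Pi.single L 1 := by
    rw [hvn1, mulVec_mulVec, hVV, one_mulVec]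
  have hUun : Uᴴ *ᵥ un = Pi.single L 1 := by
    rw [hun1, mulVec_mulVec, hUU, one_mulVec]
  have hA0vn : A₀ *ᵥ vn = 0 := by
    rw [hA₀, ← mulVec_mulVec, hVvn, ← mulVec_mulVec, diagonal_mulVec_single, hσlast]
    simp
  have hVVX : ∀ X : Matrix (Fin (n+1)) (Fin (n+1)) ℂ, Vᴴ * (V * X) = X := fun X => by
    rw [← Matrix.mul_assoc, hVV, Matrix.one_mul]
  have hAP : A₀ * P = 1 - U * Matrix.diagonal (fun i => if i = L then (1:ℂ) else 0) * Uᴴ := by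
    rw [hA₀, hP]
    simp only [Matrix.mul_assoc]
    rw [hVVX]
    rw [← Matrix.mul_assoc (Matrix.diagonal _) (Matrix.diagonal _) Uᴴ,
      Matrix.diagonal_mul_diagonal]
    have hd : (fun i => (σ i : ℂ) * (if i = L then 0 else ((σ i : ℂ))⁻¹))
        = fun i => if i = L then (0:ℂ) else 1 := by
      funext i
      by_cases h : i = L
      · simp [h]
      · have : (σ i : ℂ) ≠ 0 := by
          exact_mod_cast ne_of_gt (hσpos i h)
        simp [h, mul_inv_cancel₀ this]
    rw [hd]
    have h2 : Matrix.diagonal (fun i => if i = L then (0:ℂ) else 1)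
        = 1 - Matrix.diagonal (fun i => if i = L then (1:ℂ) else 0) := by
      ext i j
      rcases eq_or_ne i j with rfl | hij
      · by_cases h : i = L <;>
          simp [Matrix.sub_apply, Matrix.diagonal_apply_eq, Matrix.one_apply_eq, h]
      · simp [Matrix.sub_apply, Matrix.diagonal_apply_ne _ hij, Matrix.one_apply_ne hij]
    rw [h2, Matrix.sub_mul, Matrix.mul_sub, Matrix.one_mul, hUU', ← Matrix.mul_assoc]
  have hproj : ∀ x : Fin (n+1) → ℂ,
      (U * Matrix.diagonal (fun i => if i = L then (1:ℂ) else 0) * Uᴴ) *ᵥ x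
        = (star un ⬝ᵥ x) • un := by
    intro x
    have hc : (Uᴴ *ᵥ x) L = star un ⬝ᵥ x := by
      rw [hun]
      simp [mulVec, dotProduct, conjTranspose_apply]
    rw [← mulVec_mulVec, ← mulVec_mulVec]
    have hdiag : Matrix.diagonal (fun i => if i = L then (1:ℂ) else 0) *ᵥ (Uᴴ *ᵥ x)
        = Pi.single L ((Uᴴ *ᵥ x) L) := by
      funext i
      rw [mulVec_diagonal]
      by_cases h : i = L
      · subst h; simp
      · simp [h, Pi.single_apply]
    rw [hdiag, hc, mulVec_single, hun]
    funext i
    simp [mul_comm]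
  have hAPx : ∀ x : Fin (n+1) → ℂ, A₀ *ᵥ (P *ᵥ x) = x - (star un ⬝ᵥ x) • un := by
    intro x
    rw [mulVec_mulVec, hAP, Matrix.sub_mulVec, Matrix.one_mulVec, hproj]
  have hPH : Pᴴ *ᵥ vn = 0 := by
    rw [hP, conjTranspose_mul, conjTranspose_mul, conjTranspose_conjTranspose,
      Matrix.diagonal_conjTranspose]
    rw [← mulVec_mulVec, ← mulVec_mulVec, hVvn, diagonal_mulVec_single]
    simp
  have hvnP : ∀ x : Fin (n+1) → ℂ, star vn ⬝ᵥ (P *ᵥ x) = 0 := by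
    intro x
    have h : star vn ᵥ* P = 0 := by
      have h2 := star_mulVec (M := Pᴴ) (v := vn)
      rw [conjTranspose_conjTranspose] at h2
      rw [← h2, hPH]
      simp
    rw [dotProduct_mulVec, h, zero_dotProduct]
  have hvnvn : star vn ⬝ᵥ vn = 1 := by
    have h2 := star_mulVec (M := Vᴴ) (v := vn)
    rw [conjTranspose_conjTranspose] at h2
    calc star vn ⬝ᵥ vn = star vn ⬝ᵥ (V *ᵥ Pi.single L 1) := by rw [← hvn1]
      _ = (star vn ᵥ* V) ⬝ᵥ Pi.single L 1 := by rw [dotProduct_mulVec]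
      _ = star (Pi.single L 1) ⬝ᵥ Pi.single L 1 := by rw [← h2, hVvn]
      _ = 1 := by simp [dotProduct, Pi.single_apply]
  have hunun : star un ⬝ᵥ un = 1 := by
    have h2 := star_mulVec (M := Uᴴ) (v := un)
    rw [conjTranspose_conjTranspose] at h2
    calc star un ⬝ᵥ un = star un ⬝ᵥ (U *ᵥ Pi.single L 1) := by rw [← hun1]
      _ = (star un ᵥ* U) ⬝ᵥ Pi.single L 1 := by rw [dotProduct_mulVec]
      _ = star (Pi.single L 1) ⬝ᵥ Pi.single L 1 := by rw [← h2, hUun]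
      _ = 1 := by simp [dotProduct, Pi.single_apply]
  have henun : enorm2 un = 1 := by
    have h := enorm2_sq un
    rw [hunun] at h
    rw [← Real.sqrt_sq (enorm2_nonneg un), h]
    simp
  have henvn : enorm2 vn = 1 := by
    have h := enorm2_sq vn
    rw [hvnvn] at h
    rw [← Real.sqrt_sq (enorm2_nonneg vn), h]
    simp
  -- the smallest positive singular value
  set m : Fin (n+1) := ⟨n-1, by omega⟩ with hmdef
  have hmL : m ≠ L := by
    rw [hLdef]
    intro h
    have h2 := congrArg Fin.val h
    simp [hmdef, Fin.val_last] at h2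
    omega
  have hσm : 0 < σ m := hσpos m hmL
  -- bound on the action of P
  have hstar : ∀ i : Fin (n+1),
      (starRingEnd ℂ) ((fun j => if j = L then 0 else ((σ j : ℂ))⁻¹) i)
        * ((fun j => if j = L then 0 else ((σ j : ℂ))⁻¹) i)
      = ((((if i = L then 0 else (σ i)⁻¹)^2 : ℝ)) : ℂ) := by
    intro i
    by_cases h : i = L
    · simp [h]
    · simp only [h, if_false, ← Complex.ofReal_inv, Complex.conj_ofReal]
      push_cast
      ring
  have hPHP : Pᴴ * P = U * Matrix.diagonal
      (fun i => ((((if i = L then 0 else (σ i)⁻¹)^2 : ℝ)) : ℂ)) * Uᴴ := by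
    rw [hP, conjTranspose_mul, conjTranspose_mul, conjTranspose_conjTranspose,
      Matrix.diagonal_conjTranspose]
    simp only [Matrix.mul_assoc]
    rw [hVVX, ← Matrix.mul_assoc (Matrix.diagonal _) (Matrix.diagonal _) Uᴴ,
      diag_star_mul _ _ hstar]
  have hPle : ∀ x : Fin (n+1) → ℂ, enorm2 (P *ᵥ x) ≤ (σ m)⁻¹ * enorm2 x := by
    intro x
    have hd : ∀ i : Fin (n+1), (if i = L then 0 else (σ i)⁻¹)^2 ≤ ((σ m)⁻¹)^2 := by
      intro i
      by_cases h : i = L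
      · simp only [h, if_true]
        simpa using sq_nonneg ((σ m)⁻¹)
      · have him : i ≤ m := by
          rw [Fin.le_def]
          have h1 : (i : ℕ) ≠ n := fun hc => h (Fin.ext (by simp [hLdef, hc]))
          have h3 := i.isLt
          simp only [hmdef]
          omega
        have hσi : σ m ≤ σ i := hσdec i m him
        have hinv : (σ i)⁻¹ ≤ (σ m)⁻¹ := inv_anti₀ hσm hσi
        simp only [h, if_false]
        exact pow_le_pow_left₀ (inv_nonneg.mpr (hσpos i h).le) hinv 2
    refine sq_le_imp_le (enorm2_nonneg _) (mul_nonneg (inv_nonneg.mpr hσm.le) (enorm2_nonneg x)) ?_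
    have h1 : star (P *ᵥ x) ⬝ᵥ (P *ᵥ x) = star x ⬝ᵥ ((Pᴴ * P) *ᵥ x) := by
      rw [star_mulVec, dotProduct_mulVec, vecMul_vecMul, dotProduct_mulVec]
    rw [enorm2_sq, h1, hPHP, quad_eq, mul_pow, enorm2_sq_eq_sum hU x, Finset.mul_sum]
    exact Finset.sum_le_sum fun i _ =>
      mul_le_mul_of_nonneg_right (hd i) (Complex.normSq_nonneg _)
  have hPpow : ∀ (j : ℕ) (x : Fin (n+1) → ℂ),
      enorm2 ((P^j) *ᵥ x) ≤ ((σ m)⁻¹)^j * enorm2 x := by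
    intro j
    induction j with
    | zero => intro x; simp [pow_zero, Matrix.one_mulVec]
    | succ j ih =>
        intro x
        have h : (P^(j+1)) *ᵥ x = (P^j) *ᵥ (P *ᵥ x) := by
          rw [mulVec_mulVec, ← pow_succ]
        rw [h]
        calc enorm2 ((P^j) *ᵥ (P *ᵥ x)) ≤ ((σ m)⁻¹)^j * enorm2 (P *ᵥ x) := ih _
          _ ≤ ((σ m)⁻¹)^j * ((σ m)⁻¹ * enorm2 x) :=
              mul_le_mul_of_nonneg_left (hPle x) (by positivity)
          _ = ((σ m)⁻¹)^(j+1) * enorm2 x := by ring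
  -- the test vector
  set g : ℕ → (Fin (n+1) → ℂ) := fun i => (P^i) *ᵥ vn with hg
  have hg0 : g 0 = vn := by rw [hg]; simp [Matrix.one_mulVec]
  have hgsucc : ∀ i, g (i+1) = P *ᵥ g i := by
    intro i
    rw [hg]
    simp only
    rw [mulVec_mulVec, ← pow_succ']
  have hMx : ∀ x : Fin (n+1) → ℂ, (A₀ - z • 1) *ᵥ x = A₀ *ᵥ x - z • x := fun x => by
    rw [Matrix.sub_mulVec, Matrix.smul_mulVec, Matrix.one_mulVec]
  have hA0g : ∀ i, A₀ *ᵥ g (i+1) = g i - (star un ⬝ᵥ g i) • un := fun i => by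
    rw [hgsucc i, hAPx]
  have key : ∀ K : ℕ, (A₀ - z • 1) *ᵥ (vn + ∑ i ∈ Finset.range K, z^(i+1) • g (i+1))
      = -(∑ i ∈ Finset.range K, (z^(i+1) * (star un ⬝ᵥ g i)) • un) - z^(K+1) • g K := by
    intro K
    induction K with
    | zero => simp [hMx, hA0vn, hg0]
    | succ K ih =>
        rw [Finset.sum_range_succ, Finset.sum_range_succ
          (f := fun i => (z^(i+1) * (star un ⬝ᵥ g i)) • un), ← add_assoc,
          Matrix.mulVec_add, ih, hMx, mulVec_smul, hA0g]
        rw [pow_succ z (K+1)]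
        module
  set r : Fin (n+1) → ℂ := ∑ i ∈ Finset.range k, z^(i+1) • g (i+1) with hr
  set w : Fin (n+1) → ℂ := vn + r with hwdef
  have hvnr : star vn ⬝ᵥ r = 0 := by
    rw [hr, dot_sum]
    refine Finset.sum_eq_zero fun i _ => ?_
    rw [dotProduct_smul, hgsucc, hvnP]
    simp
  have hwsq : enorm2 w ^ 2 = 1 + (star r ⬝ᵥ r).re := by
    rw [enorm2_sq, hwdef, star_add, add_dotProduct, dotProduct_add, dotProduct_add,
      hvnvn, hvnr]
    have hrvn : star r ⬝ᵥ vn = 0 := by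
      rw [star_dotProduct, hvnr]
      simp
    rw [hrvn]
    simp
  have hw1 : 1 ≤ enorm2 w := by
    have h0 : 0 ≤ (star r ⬝ᵥ r).re := by
      rw [dot_self_re]
      exact Finset.sum_nonneg fun i _ => Complex.normSq_nonneg _
    nlinarith [enorm2_nonneg w, hwsq]
  have hb := sval_le_enorm_mulVec (Nat.succ_pos n) (A₀ - z • 1) w hw1
  have hnorm : enorm2 ((A₀ - z • 1) *ᵥ w) ≤
      (∑ i ∈ Finset.range k, ‖z‖^(i+1) * ‖star un ⬝ᵥ g i‖)
        + ‖z‖^(k+1) * ((σ m)⁻¹)^k := by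
    rw [hwdef, hr, key k]
    have hrw : -(∑ i ∈ Finset.range k, (z^(i+1) * (star un ⬝ᵥ g i)) • un) - z^(k+1) • g k
        = -((∑ i ∈ Finset.range k, (z^(i+1) * (star un ⬝ᵥ g i)) • un) + z^(k+1) • g k) := by
      abel
    rw [hrw, enorm2_neg]
    calc enorm2 ((∑ i ∈ Finset.range k, (z^(i+1) * (star un ⬝ᵥ g i)) • un) + z^(k+1) • g k)
        ≤ enorm2 (∑ i ∈ Finset.range k, (z^(i+1) * (star un ⬝ᵥ g i)) • un)
            + enorm2 (z^(k+1) • g k) := enorm2_add_le _ _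
      _ ≤ (∑ i ∈ Finset.range k, enorm2 ((z^(i+1) * (star un ⬝ᵥ g i)) • un))
            + enorm2 (z^(k+1) • g k) := by
            gcongr
            exact enorm2_sum_le _ _
      _ ≤ (∑ i ∈ Finset.range k, ‖z‖^(i+1) * ‖star un ⬝ᵥ g i‖)
            + ‖z‖^(k+1) * ((σ m)⁻¹)^k := by
            gcongr with i hi
            · rw [enorm2_smul, henun, mul_one, norm_mul, norm_pow]
            · rw [enorm2_smul, norm_pow]
              have := hPpow k vn
              rw [henvn, mul_one] at this
              exact mul_le_mul_of_nonneg_left this (by positivity)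
  -- rewrite the RHS
  have hRHS : ‖z‖ *
      ((∑ j ∈ Finset.Icc 1 k,
          ‖z‖ ^ (j - 1) * ‖star un ⬝ᵥ ((P ^ (j - 1)) *ᵥ vn)‖) +
        ‖z‖ ^ k / (σ m) ^ k)
      = (∑ i ∈ Finset.range k, ‖z‖^(i+1) * ‖star un ⬝ᵥ g i‖)
        + ‖z‖^(k+1) * ((σ m)⁻¹)^k := by
    have hIcc : (∑ j ∈ Finset.Icc 1 k,
        ‖z‖ ^ (j - 1) * ‖star un ⬝ᵥ ((P ^ (j - 1)) *ᵥ vn)‖)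
        = ∑ i ∈ Finset.range k, ‖z‖ ^ i * ‖star un ⬝ᵥ g i‖ := by
      rw [← Finset.Ico_add_one_right_eq_Icc, Finset.sum_Ico_eq_sum_range]
      refine Finset.sum_congr rfl fun i _ => ?_
      have h1 : 1 + i - 1 = i := by omega
      rw [h1, hg]
    rw [hIcc, mul_add, Finset.mul_sum]
    congr 1
    · refine Finset.sum_congr rfl fun i _ => ?_
      rw [pow_succ']
      ring
    · rw [div_eq_mul_inv, ← inv_pow, pow_succ']
      ring
  rw [hRHS]
  exact le_trans hb hnorm
end

section
/- With the setup of the previous statement, if additionally the spectral radius of z·A₀† is less than one (e.g. |z| < σ_{n−1} suffices since ‖A₀†‖ = 1/σ_{n−1}), then σₙ(A₀ − zI) ≤ |z| · |uₙᴴ(I − zA₀†)⁻¹vₙ|. -/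
open Matrix

lemma svalsList_length {m : Type*} [Fintype m] [DecidableEq m] (M : Matrix m m ℂ) :
    (svalsList M).length = Fintype.card m := by
  simp [svalsList, Multiset.length_sort]

lemma sval_smallest_le {N : ℕ} (M : Matrix (Fin (N+1)) (Fin (N+1)) ℂ) (i : Fin (N+1)) :
    sval M (N+1) ≤ Real.sqrt ((Matrix.isHermitian_conjTranspose_mul_self M).eigenvalues i) := by
  have hlen : (svalsList M).length = N + 1 := by simp [svalsList_length]
  have hmem : Real.sqrt ((Matrix.isHermitian_conjTranspose_mul_self M).eigenvalues i) ∈ svalsList M :=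
    (Multiset.mem_sort _).mpr (Multiset.mem_map.mpr ⟨i, by simp, rfl⟩)
  have hsorted : (svalsList M).Pairwise (· ≤ ·) := Multiset.pairwise_sort _ _
  obtain ⟨j, hj, hget⟩ := List.getElem_of_mem hmem
  have h0 : sval M (N+1) = (svalsList M)[0]'(by omega) := by
    simp only [sval, Fintype.card_fin, Nat.sub_self]
    exact List.getD_eq_getElem _ _ (by omega)
  rw [h0, ← hget]
  exact hsorted.rel_get_of_le (a := ⟨0, by omega⟩) (b := ⟨j, hj⟩) (by simp)

lemma sval_smallest_nonneg {N : ℕ} (M : Matrix (Fin (N+1)) (Fin (N+1)) ℂ) :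
    0 ≤ sval M (N+1) := by
  have hlen : (svalsList M).length = N + 1 := by simp [svalsList_length]
  have h0 : sval M (N+1) = (svalsList M)[0]'(by omega) := by
    simp only [sval, Fintype.card_fin, Nat.sub_self]
    exact List.getD_eq_getElem _ _ (by omega)
  have hmem : (svalsList M)[0]'(by omega) ∈ svalsList M := List.getElem_mem _
  rw [h0]
  obtain ⟨i, -, hi⟩ := Multiset.mem_map.mp ((Multiset.mem_sort (· ≤ ·)).mp hmem)
  rw [← hi]
  exact Real.sqrt_nonneg _

lemma conj_self_eq (a : ℂ) : star a * a = (‖a‖:ℂ)^2 := by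
  rw [Complex.star_def, mul_comm, Complex.mul_conj, Complex.normSq_eq_norm_sq]
  push_cast; ring

lemma star_dot_self {k : Type*} [Fintype k] (y : k → ℂ) :
    star y ⬝ᵥ y = ((∑ i, ‖y i‖^2 : ℝ) : ℂ) := by
  push_cast
  simp only [dotProduct, Pi.star_apply]
  congr 1; funext i
  exact conj_self_eq (y i)

lemma sval_sq_mul_le {N : ℕ} (M : Matrix (Fin (N+1)) (Fin (N+1)) ℂ) (x : Fin (N+1) → ℂ) :
    sval M (N+1)^2 * (∑ i, ‖x i‖^2) ≤ ∑ i, ‖(M *ᵥ x) i‖^2 := by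
  have hH := Matrix.isHermitian_conjTranspose_mul_self M
  set W : Matrix (Fin (N+1)) (Fin (N+1)) ℂ :=
    (hH.eigenvectorUnitary : Matrix (Fin (N+1)) (Fin (N+1)) ℂ) with hW
  set lam := hH.eigenvalues with hlam
  set c := Wᴴ *ᵥ x with hc
  have hWu : W * Wᴴ = 1 := by
    have := Matrix.mem_unitaryGroup_iff.mp hH.eigenvectorUnitary.2
    simpa [Matrix.star_eq_conjTranspose] using this
  have hdot : ∀ y : Fin (N+1) → ℂ, star x ⬝ᵥ (W *ᵥ y) = star c ⬝ᵥ y := by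
    intro y
    rw [Matrix.dotProduct_mulVec, hc, Matrix.star_mulVec, Matrix.conjTranspose_conjTranspose]
  have h1 : star (M *ᵥ x) ⬝ᵥ (M *ᵥ x) = star x ⬝ᵥ ((Mᴴ * M) *ᵥ x) := by
    rw [Matrix.star_mulVec, ← Matrix.dotProduct_mulVec, Matrix.mulVec_mulVec]
  have h2 : star x ⬝ᵥ ((Mᴴ * M) *ᵥ x)
      = star c ⬝ᵥ ((Matrix.diagonal (RCLike.ofReal ∘ lam)) *ᵥ c) := by
    conv_lhs => rw [hH.spectral_theorem, Unitary.conjStarAlgAut_apply, Matrix.mul_assoc, ← Matrix.mulVec_mulVec,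
      ← Matrix.mulVec_mulVec]
    rw [← hW, hdot]
    rfl
  have h3 : star c ⬝ᵥ ((Matrix.diagonal (RCLike.ofReal ∘ lam)) *ᵥ c)
      = ((∑ i, lam i * ‖c i‖^2 : ℝ) : ℂ) := by
    push_cast
    simp only [dotProduct, Pi.star_apply, Matrix.mulVec_diagonal, Function.comp]
    congr 1; funext i
    calc star (c i) * ((lam i : ℂ) * c i)
        = (lam i : ℂ) * (star (c i) * c i) := by ring
      _ = (lam i : ℂ) * (‖c i‖:ℂ)^2 := by rw [conj_self_eq]
  have h4 : (∑ i, ‖c i‖^2) = ∑ i, ‖x i‖^2 := by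
    have : star c ⬝ᵥ c = star x ⬝ᵥ x := by
      rw [hc, ← hdot, Matrix.mulVec_mulVec, hWu, Matrix.one_mulVec]
    rw [star_dot_self, star_dot_self] at this
    exact_mod_cast this
  have hmain : (∑ i, ‖(M *ᵥ x) i‖^2) = ∑ i, lam i * ‖c i‖^2 := by
    have := (star_dot_self (M *ᵥ x)).symm.trans ((h1.trans h2).trans h3)
    exact_mod_cast this
  rw [hmain, ← h4, Finset.mul_sum]
  apply Finset.sum_le_sum
  intro i _
  have hs : sval M (N+1)^2 ≤ lam i := by
    have h1' := sval_smallest_le M i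
    have h2' := sval_smallest_nonneg M
    have h3' : 0 ≤ lam i := by
      open scoped ComplexOrder in
      exact (Matrix.posSemidef_conjTranspose_mul_self M).eigenvalues_nonneg i
    calc sval M (N+1)^2 ≤ Real.sqrt (lam i)^2 := by
          exact pow_le_pow_left₀ h2' h1' 2
      _ = lam i := Real.sq_sqrt h3'
  exact mul_le_mul_of_nonneg_right hs (sq_nonneg _)

/-- if the spectral radius of `z A₀†` is less than one, then
`σₙ(A₀ - zI) ≤ |z| |uₙᴴ (I - z A₀†)⁻¹ vₙ|`. -/
theorem smallest_sval_bound_resolvent {n : ℕ} (hn : 1 ≤ n)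
    (U V : Matrix (Fin (n + 1)) (Fin (n + 1)) ℂ)
    (hU : U ∈ Matrix.unitaryGroup (Fin (n + 1)) ℂ)
    (hV : V ∈ Matrix.unitaryGroup (Fin (n + 1)) ℂ)
    (σ : Fin (n + 1) → ℝ)
    (hσlast : σ (Fin.last n) = 0)
    (hσpos : ∀ i : Fin (n + 1), i ≠ Fin.last n → 0 < σ i)
    (hσdec : ∀ i j : Fin (n + 1), i ≤ j → σ j ≤ σ i)
    (A₀ : Matrix (Fin (n + 1)) (Fin (n + 1)) ℂ)
    (hA₀ : A₀ = U * Matrix.diagonal (fun i => (σ i : ℂ)) * Vᴴ)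
    (P : Matrix (Fin (n + 1)) (Fin (n + 1)) ℂ)
    (hP : P = V * Matrix.diagonal (fun i => if i = Fin.last n then 0 else ((σ i : ℂ))⁻¹) * Uᴴ)
    (un vn : Fin (n + 1) → ℂ)
    (hun : un = fun i => U i (Fin.last n))
    (hvn : vn = fun i => V i (Fin.last n))
    (z : ℂ) (hspec : ∀ μ ∈ spectrum ℂ (z • P), ‖μ‖ < 1) :
    sval (A₀ - z • 1) (n + 1) ≤
      ‖z‖ * ‖star un ⬝ᵥ ((1 - z • P)⁻¹ *ᵥ vn)‖ := by
  -- unitarity facts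
  have hUu : U * Uᴴ = 1 := by
    simpa [Matrix.star_eq_conjTranspose] using (Matrix.mem_unitaryGroup_iff.mp hU)
  have hUu' : Uᴴ * U = 1 := by
    simpa [Matrix.star_eq_conjTranspose] using (Matrix.mem_unitaryGroup_iff'.mp hU)
  have hVu : V * Vᴴ = 1 := by
    simpa [Matrix.star_eq_conjTranspose] using (Matrix.mem_unitaryGroup_iff.mp hV)
  have hVu' : Vᴴ * V = 1 := by
    simpa [Matrix.star_eq_conjTranspose] using (Matrix.mem_unitaryGroup_iff'.mp hV)
  set e : Fin (n+1) → ℂ := Pi.single (Fin.last n) 1 with he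
  have hvn' : vn = V *ᵥ e := by
    rw [hvn, he, Matrix.mulVec_single]
    funext i; simp
  -- A₀ kills vn
  have hA0v : A₀ *ᵥ vn = 0 := by
    rw [hA₀, hvn', Matrix.mulVec_mulVec, Matrix.mul_assoc, Matrix.mul_assoc, hVu', Matrix.mul_one,
      ← Matrix.mulVec_mulVec, Matrix.diagonal_mulVec_single]
    rw [hσlast]
    simp
  -- A₀ * P = U * diagonal d * Uᴴ, d = indicator of non-last
  set d : Fin (n+1) → ℂ := fun i => if i = Fin.last n then 0 else 1 with hd
  have hDD : Matrix.diagonal (fun i => (σ i : ℂ)) *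
      Matrix.diagonal (fun i => if i = Fin.last n then 0 else ((σ i : ℂ))⁻¹)
      = Matrix.diagonal d := by
    rw [Matrix.diagonal_mul_diagonal]
    have : (fun i => (σ i : ℂ) * if i = Fin.last n then 0 else ((σ i : ℂ))⁻¹) = d := by
      funext i
      by_cases h : i = Fin.last n
      · simp [h, hd]
      · simp only [h, if_false, hd]
        exact mul_inv_cancel₀ (by exact_mod_cast (hσpos i h).ne')
    rw [this]
  have hAPmat : A₀ * P = U * Matrix.diagonal d * Uᴴ := by
    rw [hA₀, hP]
    calc U * Matrix.diagonal (fun i => (σ i : ℂ)) * Vᴴ *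
          (V * Matrix.diagonal (fun i => if i = Fin.last n then 0 else ((σ i : ℂ))⁻¹) * Uᴴ)
        = U * (Matrix.diagonal (fun i => (σ i : ℂ)) * (Vᴴ * V) *
            Matrix.diagonal (fun i => if i = Fin.last n then 0 else ((σ i : ℂ))⁻¹)) * Uᴴ := by
          simp only [Matrix.mul_assoc]
      _ = U * Matrix.diagonal d * Uᴴ := by
          rw [hVu', Matrix.mul_one, hDD]
  -- the action of A₀ * P
  have hAPv : ∀ y : Fin (n+1) → ℂ, (A₀ * P) *ᵥ y = y - (star un ⬝ᵥ y) • un := by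
    intro y
    have hglast : (Uᴴ *ᵥ y) (Fin.last n) = star un ⬝ᵥ y := by
      simp [Matrix.mulVec, dotProduct, Matrix.conjTranspose_apply, hun]
    rw [hAPmat, ← Matrix.mulVec_mulVec, ← Matrix.mulVec_mulVec]
    set g := Uᴴ *ᵥ y with hg
    have hdg : Matrix.diagonal d *ᵥ g = g - Pi.single (Fin.last n) (g (Fin.last n)) := by
      funext i
      simp only [Matrix.mulVec_diagonal, hd, Pi.sub_apply, Pi.single_apply]
      by_cases h : i = Fin.last n
      · subst h; simp
      · simp [h]
    rw [hdg, Matrix.mulVec_sub]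
    congr 1
    · rw [hg, Matrix.mulVec_mulVec, hUu, Matrix.one_mulVec]
    · rw [Matrix.mulVec_single, ← hglast]
      funext i; simp [hun, mul_comm]
  -- star vn annihilates range of P
  have hPvn : ∀ y : Fin (n+1) → ℂ, star vn ⬝ᵥ (P *ᵥ y) = 0 := by
    intro y
    have hPH : Pᴴ *ᵥ vn = 0 := by
      rw [hP, Matrix.conjTranspose_mul, Matrix.conjTranspose_mul,
        Matrix.conjTranspose_conjTranspose, Matrix.diagonal_conjTranspose, hvn',
        Matrix.mulVec_mulVec, Matrix.mul_assoc, Matrix.mul_assoc, hVu', Matrix.mul_one,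
        ← Matrix.mulVec_mulVec, he, Matrix.diagonal_mulVec_single]
      simp
    rw [Matrix.dotProduct_mulVec,
      show star vn ᵥ* P = star (Pᴴ *ᵥ vn) by
        rw [Matrix.star_mulVec, Matrix.conjTranspose_conjTranspose],
      hPH]
    simp
  -- invertibility of 1 - z • P
  have hunit : IsUnit (1 - z • P) := by
    by_contra h
    have h1 : (1:ℂ) ∈ spectrum ℂ (z • P) := by
      rw [spectrum.mem_iff]
      simpa using h
    have := hspec 1 h1
    simp at this
  have hdet : IsUnit (1 - z • P).det := (Matrix.isUnit_iff_isUnit_det _).mp hunit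
  set Q := (1 - z • P)⁻¹ with hQ
  set w := Q *ᵥ vn with hwdef
  have hw : w = vn + z • (P *ᵥ w) := by
    have h1 : (1 - z • P) *ᵥ w = vn := by
      rw [hwdef, Matrix.mulVec_mulVec, Matrix.mul_nonsing_inv _ hdet, Matrix.one_mulVec]
    have h2 : (1 - z • P) *ᵥ w = w - z • (P *ᵥ w) := by
      rw [Matrix.sub_mulVec, Matrix.one_mulVec, Matrix.smul_mulVec]
    rw [h2] at h1
    linear_combination (norm := module) h1
  set c := star un ⬝ᵥ w with hcdef
  -- key identity
  have hkey : (A₀ - z • 1) *ᵥ w = -((z * c) • un) := by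
    have hA0w : A₀ *ᵥ w = z • (w - c • un) := by
      conv_lhs => rw [hw]
      rw [Matrix.mulVec_add, hA0v, Matrix.mulVec_smul, Matrix.mulVec_mulVec, hAPv]
      simp [hcdef]
    rw [Matrix.sub_mulVec, hA0w, Matrix.smul_mulVec, Matrix.one_mulVec]
    funext i
    simp only [Pi.sub_apply, Pi.smul_apply, Pi.neg_apply, smul_eq_mul]
    ring
  -- norm computations
  have hun_norm : (∑ i, ‖un i‖^2) = 1 := by
    have h1 : star un ⬝ᵥ un = (Uᴴ * U) (Fin.last n) (Fin.last n) := by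
      simp [Matrix.mul_apply, dotProduct, hun, Matrix.conjTranspose_apply]
    rw [hUu'] at h1
    have h2 := (star_dot_self un).symm.trans h1
    simp only [Matrix.one_apply_eq] at h2
    exact_mod_cast h2
  have hvn_norm : (∑ i, ‖vn i‖^2) = 1 := by
    have h1 : star vn ⬝ᵥ vn = (Vᴴ * V) (Fin.last n) (Fin.last n) := by
      simp [Matrix.mul_apply, dotProduct, hvn, Matrix.conjTranspose_apply]
    rw [hVu'] at h1
    have h2 := (star_dot_self vn).symm.trans h1
    simp only [Matrix.one_apply_eq] at h2
    exact_mod_cast h2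
  -- lower bound on ∑ ‖w i‖²
  have hvnw : star vn ⬝ᵥ w = 1 := by
    conv_lhs => rw [hw]
    rw [dotProduct_add, dotProduct_smul, hPvn]
    have : star vn ⬝ᵥ vn = 1 := by
      have h1 : star vn ⬝ᵥ vn = (Vᴴ * V) (Fin.last n) (Fin.last n) := by
        simp [Matrix.mul_apply, dotProduct, hvn, Matrix.conjTranspose_apply]
      rw [hVu'] at h1
      simpa using h1
    rw [this]; simp
  have hw_norm : 1 ≤ ∑ i, ‖w i‖^2 := by
    set a : EuclideanSpace ℂ (Fin (n+1)) := (WithLp.equiv 2 _).symm vn with ha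
    set b : EuclideanSpace ℂ (Fin (n+1)) := (WithLp.equiv 2 _).symm w with hb
    have hinner : (inner ℂ a b : ℂ) = star vn ⬝ᵥ w := by
      rw [PiLp.inner_apply]
      simp [dotProduct, RCLike.inner_apply, ha, hb, Complex.star_def, mul_comm]
    have hCS := norm_inner_le_norm (𝕜 := ℂ) a b
    rw [hinner, hvnw] at hCS
    rw [norm_one] at hCS
    have hna : ‖a‖ = 1 := by
      rw [EuclideanSpace.norm_eq]
      simp only [ha, WithLp.equiv_symm_apply, PiLp.toLp_apply]
      rw [hvn_norm, Real.sqrt_one]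
    have hnb : ‖b‖ = Real.sqrt (∑ i, ‖w i‖^2) := by
      rw [EuclideanSpace.norm_eq]
      simp only [hb, WithLp.equiv_symm_apply, PiLp.toLp_apply]
    rw [hna, one_mul, hnb] at hCS
    have hS : (0:ℝ) ≤ ∑ i, ‖w i‖^2 := Finset.sum_nonneg fun i _ => sq_nonneg _
    nlinarith [Real.sq_sqrt hS, Real.sqrt_nonneg (∑ i, ‖w i‖^2)]
  -- upper bound : Rayleigh
  have hray := sval_sq_mul_le (A₀ - z • 1) w
  have hMw : (∑ i, ‖((A₀ - z • 1) *ᵥ w) i‖^2) = (‖z‖ * ‖c‖)^2 := by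
    rw [hkey]
    have : ∀ i, ‖(-((z * c) • un)) i‖^2 = ‖z * c‖^2 * ‖un i‖^2 := by
      intro i
      simp [norm_mul, mul_pow]
    rw [Finset.sum_congr rfl fun i _ => this i, ← Finset.mul_sum, hun_norm, mul_one,
      norm_mul]
  have hs0 := sval_smallest_nonneg (A₀ - z • 1)
  have habs : (0:ℝ) ≤ ‖z‖ * ‖c‖ :=
    mul_nonneg (norm_nonneg _) (norm_nonneg _)
  have hfin : sval (A₀ - z • 1) (n+1)^2 ≤ (‖z‖ * ‖c‖)^2 := by
    calc sval (A₀ - z • 1) (n+1)^2 = sval (A₀ - z • 1) (n+1)^2 * 1 := by ring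
      _ ≤ sval (A₀ - z • 1) (n+1)^2 * ∑ i, ‖w i‖^2 := by
          exact mul_le_mul_of_nonneg_left hw_norm (sq_nonneg _)
      _ ≤ ∑ i, ‖((A₀ - z • 1) *ᵥ w) i‖^2 := hray
      _ = (‖z‖ * ‖c‖)^2 := hMw
  calc sval (A₀ - z • 1) (n+1)
      = Real.sqrt (sval (A₀ - z • 1) (n+1)^2) := (Real.sqrt_sq hs0).symm
    _ ≤ Real.sqrt ((‖z‖ * ‖c‖)^2) := Real.sqrt_le_sqrt hfin
    _ = ‖z‖ * ‖c‖ := Real.sqrt_sq habs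
end

section
/- Let A be an n×n complex matrix with eigenvalue λ, A₀ := A−λI with second smallest singular value σ_{n−1} > 0 and singular vectors uₙ, vₙ for the zero singular value, and ε > 0. If z ∈ ℂ satisfies |z−λ|·(|uₙᴴvₙ| + |z−λ|/σ_{n−1}) < ε, then z lies in the ε-pseudospectrum of A, i.e., σₙ(A−zI) < ε. -/
open Matrix

lemma getD_zero_le {l : List ℝ} (hl : l.Pairwise (· ≤ ·)) {a : ℝ} (ha : a ∈ l) :
    l.getD 0 0 ≤ a := by
  cases l with
  | nil => simp at ha
  | cons b t =>
    rcases List.mem_cons.mp ha with rfl | ha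
    · simp
    · simpa using (List.pairwise_cons.mp hl).1 a ha

lemma sval_card_le {m : Type*} [Fintype m] [DecidableEq m] (M : Matrix m m ℂ) (i : m) :
    sval M (Fintype.card m) ≤
      Real.sqrt ((Matrix.isHermitian_conjTranspose_mul_self M).eigenvalues i) := by
  have hmem : Real.sqrt ((Matrix.isHermitian_conjTranspose_mul_self M).eigenvalues i) ∈ svalsList M := by
    rw [svalsList, Multiset.mem_sort]
    exact Multiset.mem_map.mpr ⟨i, by simp, rfl⟩
  have hs : (svalsList M).Pairwise (· ≤ ·) := Multiset.pairwise_sort _ _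
  simpa [sval] using getD_zero_le hs hmem

lemma dp_conj {m : Type*} [Fintype m] (B C : Matrix m m ℂ) (v w : m → ℂ) :
    star (B *ᵥ v) ⬝ᵥ (C *ᵥ w) = star v ⬝ᵥ ((Bᴴ * C) *ᵥ w) := by
  rw [star_mulVec, ← dotProduct_mulVec, mulVec_mulVec]

lemma rayleigh_min {m : Type*} [Fintype m] [DecidableEq m] (M : Matrix m m ℂ) (x : m → ℂ)
    (i₀ : m) (hmin : ∀ j, (Matrix.isHermitian_conjTranspose_mul_self M).eigenvalues i₀ ≤
      (Matrix.isHermitian_conjTranspose_mul_self M).eigenvalues j) :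
    (Matrix.isHermitian_conjTranspose_mul_self M).eigenvalues i₀ * (star x ⬝ᵥ x).re ≤
      (star x ⬝ᵥ ((Mᴴ * M) *ᵥ x)).re := by
  set hH := Matrix.isHermitian_conjTranspose_mul_self M
  set W : Matrix m m ℂ := (hH.eigenvectorUnitary : Matrix m m ℂ) with hW
  have hWW : W * Wᴴ = 1 := by
    rw [← Matrix.star_eq_conjTranspose]
    exact Unitary.coe_mul_star_self hH.eigenvectorUnitary
  have hWW' : Wᴴ * W = 1 := by
    rw [← Matrix.star_eq_conjTranspose]
    exact Unitary.coe_star_mul_self hH.eigenvectorUnitary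
  set y : m → ℂ := Wᴴ *ᵥ x with hy
  have hyy : star y ⬝ᵥ y = star x ⬝ᵥ x := by
    rw [hy, dp_conj, conjTranspose_conjTranspose, hWW, one_mulVec]
  have hspec : Mᴴ * M = W * Matrix.diagonal (fun i => (hH.eigenvalues i : ℂ)) * Wᴴ := by
    convert hH.spectral_theorem using 3
    rw [Unitary.conjStarAlgAut_apply]; rfl
  have hxy : star x ᵥ* W = star y := by
    rw [hy, star_mulVec, conjTranspose_conjTranspose]
  have key : star x ⬝ᵥ ((Mᴴ * M) *ᵥ x) =
      star y ⬝ᵥ (Matrix.diagonal (fun i => (hH.eigenvalues i : ℂ)) *ᵥ y) := by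
    conv_lhs => rw [hspec]
    rw [← mulVec_mulVec, ← mulVec_mulVec, dotProduct_mulVec, hxy]
  rw [key, hyy.symm]
  have expand : star y ⬝ᵥ (Matrix.diagonal (fun i => (hH.eigenvalues i : ℂ)) *ᵥ y) =
      ∑ i, (hH.eigenvalues i : ℂ) * (Complex.normSq (y i) : ℂ) := by
    simp only [dotProduct, mulVec_diagonal, Pi.star_apply, RCLike.star_def]
    refine Finset.sum_congr rfl fun i _ => ?_
    rw [show (starRingEnd ℂ) (y i) * ((hH.eigenvalues i : ℂ) * y i) =
      (hH.eigenvalues i : ℂ) * (y i * (starRingEnd ℂ) (y i)) by ring, Complex.mul_conj]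
  have expand2 : star y ⬝ᵥ y = ∑ i, (Complex.normSq (y i) : ℂ) := by
    simp only [dotProduct, Pi.star_apply, RCLike.star_def]
    refine Finset.sum_congr rfl fun i _ => ?_
    rw [mul_comm, Complex.mul_conj]
  rw [expand, expand2]
  push_cast
  rw [Complex.re_sum, Complex.re_sum]
  simp only [Complex.mul_re, Complex.ofReal_re, Complex.ofReal_im, mul_zero, zero_mul, sub_zero]
  rw [Finset.mul_sum]
  refine Finset.sum_le_sum fun i _ => ?_
  exact mul_le_mul_of_nonneg_right (hmin i) (Complex.normSq_nonneg _)



set_option maxHeartbeats 1000000 in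
/-- a disk condition about an eigenvalue guaranteeing membership in the
ε-pseudospectrum `{z : σₙ(A - zI) < ε}`. -/
theorem disk_in_pseudospectrum {n : ℕ} (hn : 1 ≤ n)
    (U V : Matrix (Fin (n + 1)) (Fin (n + 1)) ℂ)
    (hU : U ∈ Matrix.unitaryGroup (Fin (n + 1)) ℂ)
    (hV : V ∈ Matrix.unitaryGroup (Fin (n + 1)) ℂ)
    (σ : Fin (n + 1) → ℝ)
    (hσlast : σ (Fin.last n) = 0)
    (hσpos : ∀ i : Fin (n + 1), i ≠ Fin.last n → 0 < σ i)
    (hσdec : ∀ i j : Fin (n + 1), i ≤ j → σ j ≤ σ i)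
    (A₀ : Matrix (Fin (n + 1)) (Fin (n + 1)) ℂ)
    (hA₀ : A₀ = U * Matrix.diagonal (fun i => (σ i : ℂ)) * Vᴴ)
    (P : Matrix (Fin (n + 1)) (Fin (n + 1)) ℂ)
    (hP : P = V * Matrix.diagonal (fun i => if i = Fin.last n then 0 else ((σ i : ℂ))⁻¹) * Uᴴ)
    (un vn : Fin (n + 1) → ℂ)
    (hun : un = fun i => U i (Fin.last n))
    (hvn : vn = fun i => V i (Fin.last n))
    (A : Matrix (Fin (n + 1)) (Fin (n + 1)) ℂ) (lam : ℂ)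
    (hA : A₀ = A - lam • 1)
    (ε : ℝ) (hε : 0 < ε) (z : ℂ)
    (hz : ‖z - lam‖ *
        (‖star un ⬝ᵥ vn‖ + ‖z - lam‖ / σ ⟨n - 1, by omega⟩) < ε) :
    sval (A - z • 1) (n + 1) < ε := by
  set w : ℂ := z - lam with hw
  set d : ℂ := star un ⬝ᵥ vn with hd
  set M : Matrix (Fin (n+1)) (Fin (n+1)) ℂ := A - z • 1 with hMs
  have hMdef : M = A₀ - w • (1 : Matrix (Fin (n+1)) (Fin (n+1)) ℂ) := by
    rw [hMs, hA, hw, sub_smul]; abel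
  set idx : Fin (n+1) := ⟨n - 1, by omega⟩ with hidx
  have hidxne : idx ≠ Fin.last n := by
    simp only [hidx, Fin.ne_iff_vne, Fin.last]; omega
  have hσ2 : 0 < σ idx := hσpos idx hidxne
  have hz' : ‖w‖ * (‖d‖ + ‖w‖ / σ idx) < ε := hz
  have hσle : ∀ i : Fin (n+1), i ≠ Fin.last n → σ idx ≤ σ i := by
    intro i hi
    refine hσdec i idx ?_
    have h1 : (i : ℕ) ≠ n := by simpa [Fin.ne_iff_vne, Fin.last] using hi
    have h2 := i.isLt
    rw [Fin.le_def]
    simp only [hidx]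
    omega
  -- unitarity
  have hUU : U * Uᴴ = 1 := by
    rw [← Matrix.star_eq_conjTranspose]; exact (Matrix.mem_unitaryGroup_iff).mp hU
  have hUU' : Uᴴ * U = 1 := by
    rw [← Matrix.star_eq_conjTranspose]; exact (Matrix.mem_unitaryGroup_iff').mp hU
  have hVV : V * Vᴴ = 1 := by
    rw [← Matrix.star_eq_conjTranspose]; exact (Matrix.mem_unitaryGroup_iff).mp hV
  have hVV' : Vᴴ * V = 1 := by
    rw [← Matrix.star_eq_conjTranspose]; exact (Matrix.mem_unitaryGroup_iff').mp hV
  -- basic vectors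
  set e : Fin (n+1) → ℂ := Pi.single (Fin.last n) 1 with he
  have hvn2 : vn = V *ᵥ e := by funext i; simp [hvn, he]
  have hun2 : un = U *ᵥ e := by funext i; simp [hun, he]
  have hse : star e = e := by
    funext i; simp [he, Pi.single_apply, apply_ite]
  have hee : star e ⬝ᵥ e = 1 := by
    rw [hse, he, single_dotProduct, one_mul, Pi.single_eq_same]
  have hvv : star vn ⬝ᵥ vn = 1 := by rw [hvn2, dp_conj, hVV', one_mulVec, hee]
  have huu : star un ⬝ᵥ un = 1 := by rw [hun2, dp_conj, hUU', one_mulVec, hee]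
  set D : Matrix (Fin (n+1)) (Fin (n+1)) ℂ := diagonal (fun i => (σ i : ℂ)) with hD
  set D' : Matrix (Fin (n+1)) (Fin (n+1)) ℂ :=
    diagonal (fun i => if i = Fin.last n then 0 else ((σ i : ℂ))⁻¹) with hD'
  set c : Fin (n+1) → ℂ := Uᴴ *ᵥ vn with hc
  set q : Fin (n+1) → ℂ := P *ᵥ vn with hq
  have hq2 : q = V *ᵥ (D' *ᵥ c) := by
    rw [hq, hP, hc, mulVec_mulVec, mulVec_mulVec]
  have hcc : star c ⬝ᵥ c = 1 := by
    rw [hc, dp_conj, conjTranspose_conjTranspose, hUU, one_mulVec, hvv]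
  have hclast : c (Fin.last n) = d := by
    simp [hc, hd, mulVec, dotProduct, conjTranspose_apply, hun]
  -- A₀ vn = 0
  have h1 : A₀ *ᵥ vn = 0 := by
    rw [hA₀, hvn2, mulVec_mulVec, Matrix.mul_assoc (U * D) Vᴴ V, hVV', Matrix.mul_one,
      ← mulVec_mulVec, hD, he, diagonal_mulVec_single, hσlast]
    simp
  -- A₀ * P
  set E : Matrix (Fin (n+1)) (Fin (n+1)) ℂ :=
    diagonal (fun i => if i = Fin.last n then (0:ℂ) else 1) with hE
  set F : Matrix (Fin (n+1)) (Fin (n+1)) ℂ :=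
    diagonal (fun i => if i = Fin.last n then (1:ℂ) else 0) with hF
  have hDD : D * D' = E := by
    rw [hD, hD', hE, diagonal_mul_diagonal]
    refine congrArg diagonal (funext fun i => ?_)
    by_cases hi : i = Fin.last n
    · simp [hi]
    · have hne : (σ i : ℂ) ≠ 0 := by exact_mod_cast (hσpos i hi).ne'
      simp [hi, hne, mul_inv_cancel₀]
  have h2 : A₀ * P = U * E * Uᴴ := by
    rw [hA₀, hP]
    simp only [Matrix.mul_assoc]
    rw [← Matrix.mul_assoc Vᴴ V (D' * Uᴴ), hVV', Matrix.one_mul,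
      ← Matrix.mul_assoc D D' Uᴴ, hDD]
  have hE1 : E = 1 - F := by
    ext i j
    rcases eq_or_ne i j with rfl | hij
    · by_cases hi : i = Fin.last n <;>
        simp [hE, hF, Matrix.sub_apply, Matrix.one_apply_eq, hi]
    · simp [hE, hF, Matrix.sub_apply, Matrix.diagonal_apply_ne _ hij, Matrix.one_apply_ne hij]
  have hFc : F *ᵥ c = Pi.single (Fin.last n) d := by
    funext i
    rcases eq_or_ne i (Fin.last n) with rfl | hi
    · simp [hF, mulVec_diagonal, hclast]
    · simp [hF, mulVec_diagonal, hi, Pi.single_eq_of_ne hi]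
  have h3 : A₀ *ᵥ q = vn - d • un := by
    have hstep : A₀ *ᵥ q = (A₀ * P) *ᵥ vn := by rw [hq, mulVec_mulVec]
    rw [hstep, h2, hE1, Matrix.mul_sub, Matrix.mul_one, Matrix.sub_mul, hUU, sub_mulVec,
      one_mulVec]
    congr 1
    rw [Matrix.mul_assoc, ← mulVec_mulVec, ← mulVec_mulVec, ← hc, hFc]
    funext i
    simp [hun, mul_comm]
  -- test vector
  set x : Fin (n+1) → ℂ := vn + w • q with hx
  have hMx : M *ᵥ x = (-(w * d)) • un + (-(w * w)) • q := by
    rw [hMdef, hx, sub_mulVec, mulVec_add, mulVec_add, h1, mulVec_smul, h3,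
      smul_mulVec, smul_mulVec, one_mulVec, one_mulVec]
    module
  -- Euclidean space
  set ev : (Fin (n+1) → ℂ) → EuclideanSpace ℂ (Fin (n+1)) :=
    ⇑(WithLp.equiv 2 (Fin (n+1) → ℂ)).symm with hev
  have hinner : ∀ a b : Fin (n+1) → ℂ, (inner ℂ (ev a) (ev b) : ℂ) = star a ⬝ᵥ b := fun a b =>
    (EuclideanSpace.inner_toLp_toLp a b).trans (dotProduct_comm _ _)
  have hnormsq : ∀ a : Fin (n+1) → ℂ, ‖ev a‖ ^ 2 = (star a ⬝ᵥ a).re := by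
    intro a
    rw [← inner_self_eq_norm_sq (𝕜 := ℂ), hinner]
    simp
  have hre : ∀ u : Fin (n+1) → ℂ, (star u ⬝ᵥ u).re = ∑ i, Complex.normSq (u i) := by
    intro u
    rw [dotProduct, Complex.re_sum]
    refine Finset.sum_congr rfl fun i _ => ?_
    simp only [Pi.star_apply, RCLike.star_def]
    rw [mul_comm, Complex.mul_conj, Complex.ofReal_re]
  have hNun : ‖ev un‖ = 1 := by
    have h := hnormsq un
    rw [huu] at h
    simp only [Complex.one_re] at h
    nlinarith [norm_nonneg (ev un)]
  have hq3 : (star q ⬝ᵥ q).re ≤ ((σ idx)⁻¹)^2 := by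
    have h0 : star q ⬝ᵥ q = star (D' *ᵥ c) ⬝ᵥ (D' *ᵥ c) := by
      rw [hq2, dp_conj, hVV', one_mulVec]
    rw [h0, hre]
    have hb : ∀ i, Complex.normSq ((D' *ᵥ c) i) ≤ ((σ idx)⁻¹)^2 * Complex.normSq (c i) := by
      intro i
      rw [hD', mulVec_diagonal, Complex.normSq_mul]
      refine mul_le_mul_of_nonneg_right ?_ (Complex.normSq_nonneg _)
      by_cases hi : i = Fin.last n
      · rw [hi, if_pos rfl, map_zero]
        positivity
      · rw [if_neg hi, ← Complex.ofReal_inv, Complex.normSq_ofReal]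
        have h4 := hσle i hi
        have h5 := hσpos i hi
        have h6 : (σ i)⁻¹ ≤ (σ idx)⁻¹ := by
          apply inv_anti₀ hσ2 h4
        have h7 := mul_le_mul h6 h6 (inv_pos.mpr h5).le (inv_pos.mpr hσ2).le
        nlinarith [h7]
      
    calc ∑ i, Complex.normSq ((D' *ᵥ c) i)
        ≤ ∑ i, ((σ idx)⁻¹)^2 * Complex.normSq (c i) := Finset.sum_le_sum fun i _ => hb i
      _ = ((σ idx)⁻¹)^2 * (star c ⬝ᵥ c).re := by rw [hre, Finset.mul_sum]
      _ = ((σ idx)⁻¹)^2 := by rw [hcc]; simp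
  have hNq : ‖ev q‖ ≤ (σ idx)⁻¹ := by
    have h := hnormsq q
    nlinarith [norm_nonneg (ev q), inv_pos.mpr hσ2, hq3]
  have hvq : star vn ⬝ᵥ q = 0 := by
    rw [hq2, hvn2, dp_conj, hVV', one_mulVec, hse, he, single_dotProduct, one_mul,
      hD', mulVec_diagonal]
    simp
  have hxnorm : 1 ≤ ‖ev x‖ ^ 2 := by
    have hevx : ev x = ev vn + w • ev q := by
      rw [hx, hev]
      simp [WithLp.equiv_symm_apply, WithLp.toLp_add, WithLp.toLp_smul]
    rw [hevx, @norm_add_sq ℂ]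
    have h1' : ‖ev vn‖ ^ 2 = 1 := by rw [hnormsq, hvv]; simp
    have h2' : (inner ℂ (ev vn) (w • ev q) : ℂ) = 0 := by
      rw [inner_smul_right, hinner, hvq, mul_zero]
    rw [h1', h2']
    simp only [map_zero, mul_zero, add_zero]
    nlinarith [sq_nonneg ‖w • ev q‖]
  set B : ℝ := ‖w‖ * ‖d‖ + ‖w‖ * ‖w‖ * (σ idx)⁻¹ with hB
  have hB0 : 0 ≤ B := by positivity
  have hBε : B < ε := by
    refine lt_of_le_of_lt (le_of_eq ?_) hz'
    rw [hB]
    field_simp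
  have hMxnorm : ‖ev (M *ᵥ x)‖ ≤ B := by
    have hevMx : ev (M *ᵥ x) = (-(w*d)) • ev un + (-(w*w)) • ev q := by
      rw [hMx, hev]
      simp [WithLp.equiv_symm_apply, WithLp.toLp_add, WithLp.toLp_smul]
    rw [hevMx, hB]
    refine le_trans (norm_add_le _ _) ?_
    rw [norm_smul, norm_smul, hNun, mul_one]
    simp only [norm_neg, norm_mul]
    gcongr
  obtain ⟨i₀, -, hi₀⟩ := Finset.exists_min_image Finset.univ
    (Matrix.isHermitian_conjTranspose_mul_self M).eigenvalues Finset.univ_nonempty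
  have hray := rayleigh_min M x i₀ (fun j => hi₀ j (Finset.mem_univ j))
  have hrr : (star x ⬝ᵥ ((Mᴴ * M) *ᵥ x)).re = ‖ev (M *ᵥ x)‖^2 := by
    rw [hnormsq, dp_conj]
  have hxx : (star x ⬝ᵥ x).re = ‖ev x‖^2 := (hnormsq x).symm
  have e0 : 0 ≤ (Matrix.isHermitian_conjTranspose_mul_self M).eigenvalues i₀ :=
    Matrix.eigenvalues_conjTranspose_mul_self_nonneg M i₀
  have heig : (Matrix.isHermitian_conjTranspose_mul_self M).eigenvalues i₀ ≤ B^2 := by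
    rw [hrr, hxx] at hray
    nlinarith [norm_nonneg (ev (M *ᵥ x))]
  have hle : sval M (n+1) ≤ B := by
    have h := sval_card_le M i₀
    rw [Fintype.card_fin] at h
    refine h.trans ?_
    rw [show B = Real.sqrt (B^2) from (Real.sqrt_sq hB0).symm]
    exact Real.sqrt_le_sqrt heig
  exact lt_of_le_of_lt hle hBε
end
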